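/- arXiv:1002.1033 — 4 statements merged into one kernel-verified Lean document; each statement's English description precedes it below -/
import Mathlib

section
/- Let G be a bipartite graph with bipartition A, B where |A| = |B| = n, such that G has a 2-factor and all 2-factors of G have the same parity of number of cycles (G is pseudo 2-factor isomorphic). Then G has a vertex of degree at most ⌊log₂ n⌋ + 2. -/
open SimpleGraph

/-- `F` is a 2-factor of `G`: a spanning subgraph in which every vertex has degree 2. -/
def IsTwoFactor {V : Type*} (G F : SimpleGraph V) : Prop :=
  F ≤ G ∧ ∀ v, (F.neighborSet v).ncard = 2

/-- The number of cycles of a 2-factor, i.e. its number of connected components. -/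
noncomputable def numCycles {V : Type*} (F : SimpleGraph V) : ℕ :=
  Nat.card F.ConnectedComponent

/-- `G` is pseudo 2-factor isomorphic: it has a 2-factor and the parity of the number of
cycles is the same for all its 2-factors. -/
def PseudoTwoFactorIso {V : Type*} (G : SimpleGraph V) : Prop :=
  (∃ F, IsTwoFactor G F) ∧ ∀ F₁ F₂, IsTwoFactor G F₁ → IsTwoFactor G F₂ →
    numCycles F₁ % 2 = numCycles F₂ % 2



/-- The setoid of the `SameCycle` relation of a permutation. -/
def sameCycleSetoid {γ : Type*} (ρ : Equiv.Perm γ) : Setoid γ :=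
  ⟨ρ.SameCycle, ⟨Equiv.Perm.SameCycle.refl ρ, fun h => h.symm, fun h h' => h.trans h'⟩⟩

/-- The number of orbits (cycles plus fixed points) of a permutation. -/
noncomputable def permOrbits {γ : Type*} (ρ : Equiv.Perm γ) : ℕ :=
  Nat.card (Quotient (sameCycleSetoid ρ))

lemma permOrbits_eq {γ : Type*} [Fintype γ] [DecidableEq γ] (ρ : Equiv.Perm γ) :
    permOrbits ρ = Multiset.card ρ.cycleType + (Fintype.card γ - ρ.support.card) := by
  classical
  set T := (↥ρ.cycleFactorsFinset ⊕ {y : γ // ρ y = y}) with hT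
  set f : γ → T := fun a =>
    if h : ρ a = a then Sum.inr ⟨a, h⟩ else
      Sum.inl ⟨ρ.cycleOf a, by
        rw [Equiv.Perm.cycleOf_mem_cycleFactorsFinset_iff, Equiv.Perm.mem_support]; exact h⟩
    with hf
  have hfix : ∀ a (h : ρ a = a), f a = Sum.inr ⟨a, h⟩ := fun a h => dif_pos h
  have hmov : ∀ a (h : ¬ ρ a = a), (∃ hc, f a = Sum.inl ⟨ρ.cycleOf a, hc⟩) :=
    fun a h => ⟨_, dif_neg h⟩
  have hresp : ∀ a b, ρ.SameCycle a b → f a = f b := by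
    intro a b hab
    by_cases ha : ρ a = a
    · have : a = b := by
        obtain ⟨i, hi⟩ := hab
        rw [← hi]
        exact (Equiv.Perm.zpow_apply_eq_self_of_apply_eq_self ha i).symm
      subst this; rfl
    · by_cases hb : ρ b = b
      · exfalso
        obtain ⟨i, hi⟩ := hab.symm
        apply ha
        rw [← hi]
        have : (ρ ^ i) b = b := Equiv.Perm.zpow_apply_eq_self_of_apply_eq_self hb i
        rw [this]; exact hb
      · obtain ⟨hca, hfa⟩ := hmov a ha
        obtain ⟨hcb, hfb⟩ := hmov b hb
        rw [hfa, hfb]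
        congr 1
        exact Subtype.ext hab.cycleOf_eq
  have key : Quotient (sameCycleSetoid ρ) ≃ T := by
    refine Equiv.ofBijective (Quotient.lift f hresp) ⟨?_, ?_⟩
    · -- injective
      intro q1 q2
      induction q1 using Quotient.ind
      induction q2 using Quotient.ind
      rename_i a b
      intro hab
      have hab : f a = f b := hab
      apply Quotient.sound
      by_cases ha : ρ a = a <;> by_cases hb : ρ b = b
      · rw [hfix a ha, hfix b hb] at hab
        cases hab
        exact Equiv.Perm.SameCycle.refl ρ _
      · obtain ⟨hcb, hfb⟩ := hmov b hb
        rw [hfix a ha, hfb] at hab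
        cases hab
      · obtain ⟨hca, hfa⟩ := hmov a ha
        rw [hfix b hb, hfa] at hab
        cases hab
      · obtain ⟨hca, hfa⟩ := hmov a ha
        obtain ⟨hcb, hfb⟩ := hmov b hb
        rw [hfa, hfb] at hab
        have hcyc : ρ.cycleOf a = ρ.cycleOf b := by
          have := congrArg (fun x => match x with | Sum.inl c => c.val | Sum.inr _ => 1) hab
          simpa using this
        have hbmem : b ∈ (ρ.cycleOf a).support := by
          rw [hcyc, Equiv.Perm.mem_support_cycleOf_iff]
          exact ⟨Equiv.Perm.SameCycle.refl _ _, by rwa [Equiv.Perm.mem_support]⟩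
        exact ((Equiv.Perm.mem_support_cycleOf_iff).1 hbmem).1
    · -- surjective
      rintro (⟨c, hc⟩ | ⟨y, hy⟩)
      · have hcyc := (Equiv.Perm.mem_cycleFactorsFinset_iff.1 hc).1
        obtain ⟨a, ha1, -⟩ := hcyc
        have ha : a ∈ c.support := by rwa [Equiv.Perm.mem_support]
        refine ⟨⟦a⟧, ?_⟩
        have hmoved : ¬ ρ a = a := by
          have h2 := (Equiv.Perm.mem_cycleFactorsFinset_iff.1 hc).2 a ha
          rw [← h2]; exact ha1
        obtain ⟨hca, hfa⟩ := hmov a hmoved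
        show f a = _
        rw [hfa]
        congr 1
        exact Subtype.ext (Equiv.Perm.cycle_is_cycleOf ha hc).symm
      · exact ⟨⟦y⟧, hfix y hy⟩
  have h1 : permOrbits ρ = Nat.card ↥ρ.cycleFactorsFinset + Nat.card {y : γ // ρ y = y} := by
    rw [permOrbits, Nat.card_congr key, hT, Nat.card_sum]
  rw [h1]
  congr 1
  · rw [Nat.card_eq_fintype_card, Fintype.card_coe, Equiv.Perm.cycleType_def, Multiset.card_map]
    rfl
  · rw [Nat.card_eq_fintype_card]
    have h3 : Fintype.card {y : γ // ρ y = y} = (Finset.univ.filter (fun y => ρ y = y)).card := by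
      rw [Fintype.card_subtype]
    rw [h3]
    have h2 : ρ.support = Finset.univ.filter (fun y => ¬ ρ y = y) := by
      ext y; simp [Equiv.Perm.mem_support]
    rw [h2]
    have h4 := Finset.card_filter_add_card_filter_not (s := (Finset.univ : Finset γ))
      (p := fun y => ρ y = y)
    have h5 : (Finset.univ : Finset γ).card = Fintype.card γ := Finset.card_univ
    omega

lemma neg_one_pow_congr' {a b : ℕ} (h : a % 2 = b % 2) : ((-1 : ℤˣ)) ^ a = (-1) ^ b := by
  rcases Nat.even_or_odd a with ha | ha
  · have hb : Even b := Nat.even_iff.2 (by rw [← h]; exact Nat.even_iff.1 ha)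
    rw [Even.neg_one_pow ha, Even.neg_one_pow hb]
  · have hb : Odd b := Nat.odd_iff.2 (by rw [← h]; exact Nat.odd_iff.1 ha)
    rw [Odd.neg_one_pow ha, Odd.neg_one_pow hb]

lemma sign_eq_pow_orbits {γ : Type*} [Fintype γ] [DecidableEq γ] (ρ : Equiv.Perm γ) :
    Equiv.Perm.sign ρ = (-1) ^ (Fintype.card γ + permOrbits ρ) := by
  rw [Equiv.Perm.sign_of_cycleType, permOrbits_eq]
  apply neg_one_pow_congr'
  have hs : ρ.support.card ≤ Fintype.card γ := Finset.card_le_univ _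
  rw [Equiv.Perm.sum_cycleType]
  omega


lemma exists_good_coloring {γ : Type*} [Fintype γ] [DecidableEq γ] [Nonempty γ]
    (O : γ → Finset γ) (hself : ∀ a, a ∉ O a)
    (hcard : ∀ a, Nat.log 2 (Fintype.card γ) + 1 ≤ (O a).card) :
    ∃ x : γ → Bool, ∀ a, ∃ b ∈ O a, x b ≠ x a := by
  classical
  set n := Fintype.card γ with hn
  set L := Nat.log 2 n with hL
  have hn1 : 1 ≤ n := Fintype.card_pos
  have hLn : L + 1 ≤ n := Nat.log_lt_self 2 (by omega)
  by_contra hno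
  push_neg at hno
  -- every coloring is "bad" at some vertex
  have hbadall : ∀ x : γ → Bool, ∃ a, ∀ b ∈ O a, x b = x a := hno
  set Q : γ → (γ → Bool) → Prop := fun a x => ∀ b ∈ O a, x b = x a with hQ
  have hcover : (Finset.univ : Finset (γ → Bool)) ⊆
      Finset.univ.biUnion (fun a => Finset.univ.filter (Q a)) := by
    intro x _
    obtain ⟨a, ha⟩ := hbadall x
    exact Finset.mem_biUnion.2 ⟨a, Finset.mem_univ a, Finset.mem_filter.2 ⟨Finset.mem_univ x, ha⟩⟩
  have hbound : ∀ a, (Finset.univ.filter (Q a)).card ≤ 2 ^ (n - (L + 1)) := by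
    intro a
    set S : Finset γ := insert a (O a) with hS
    have hcS : S.card = (O a).card + 1 := Finset.card_insert_of_notMem (hself a)
    have hcard2 : (Finset.univ.filter (Q a)).card ≤ 2 ^ ((Sᶜ : Finset γ).card) * 2 := by
      have hmaps : ∀ x ∈ Finset.univ.filter (Q a),
          ((fun i : ↥(Sᶜ : Finset γ) => x i.val, x a) :
            ((↥(Sᶜ : Finset γ) → Bool) × Bool)) ∈
            (Finset.univ : Finset ((↥(Sᶜ : Finset γ) → Bool) × Bool)) :=
        fun x _ => Finset.mem_univ _
      have hinj : ∀ x ∈ Finset.univ.filter (Q a), ∀ y ∈ Finset.univ.filter (Q a),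
          ((fun i : ↥(Sᶜ : Finset γ) => x i.val, x a) :
            ((↥(Sᶜ : Finset γ) → Bool) × Bool)) = (fun i => y i.val, y a) → x = y := by
        intro x hx y hy hxy
        simp only [Prod.mk.injEq] at hxy
        obtain ⟨h1, h2⟩ := hxy
        have hx' : Q a x := (Finset.mem_filter.1 hx).2
        have hy' : Q a y := (Finset.mem_filter.1 hy).2
        funext c
        by_cases hc : c ∈ S
        · rw [hS, Finset.mem_insert] at hc
          rcases hc with rfl | hc
          · exact h2
          · rw [hx' c hc, hy' c hc, h2]
        · exact congrFun h1 ⟨c, Finset.mem_compl.2 hc⟩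
      calc (Finset.univ.filter (Q a)).card
          ≤ (Finset.univ : Finset ((↥(Sᶜ : Finset γ) → Bool) × Bool)).card :=
            Finset.card_le_card_of_injOn _ hmaps hinj
        _ = 2 ^ ((Sᶜ : Finset γ).card) * 2 := by
            rw [Finset.card_univ, Fintype.card_prod, Fintype.card_fun, Fintype.card_bool,
              Fintype.card_coe]
    have hcompl : (Sᶜ : Finset γ).card = n - ((O a).card + 1) := by
      rw [Finset.card_compl, hcS]
    have hOn : (O a).card + 1 ≤ n := by rw [← hcS]; exact Finset.card_le_univ S
    have hOL : L + 1 ≤ (O a).card := hcard a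
    calc (Finset.univ.filter (Q a)).card ≤ 2 ^ ((Sᶜ : Finset γ).card) * 2 := hcard2
      _ = 2 ^ (n - ((O a).card + 1) + 1) := by rw [hcompl, pow_succ]
      _ ≤ 2 ^ (n - (L + 1)) := by
          apply Nat.pow_le_pow_right (by norm_num)
          omega
  have htotal : (2:ℕ) ^ n ≤ n * 2 ^ (n - (L + 1)) := by
    calc (2:ℕ) ^ n = Fintype.card (γ → Bool) := by
          rw [Fintype.card_fun, Fintype.card_bool]
      _ = (Finset.univ : Finset (γ → Bool)).card := (Finset.card_univ).symm
      _ ≤ (Finset.univ.biUnion (fun a => Finset.univ.filter (Q a))).card :=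
          Finset.card_le_card hcover
      _ ≤ ∑ a : γ, (Finset.univ.filter (Q a)).card := Finset.card_biUnion_le
      _ ≤ ∑ _a : γ, 2 ^ (n - (L + 1)) := Finset.sum_le_sum (fun a _ => hbound a)
      _ = n * 2 ^ (n - (L + 1)) := by rw [Finset.sum_const, Finset.card_univ, smul_eq_mul]
  have hstrict : n * 2 ^ (n - (L + 1)) < 2 ^ n := by
    have h1 : n < 2 ^ (L + 1) := Nat.lt_pow_succ_log_self (by norm_num) n
    calc n * 2 ^ (n - (L + 1)) < 2 ^ (L + 1) * 2 ^ (n - (L + 1)) := by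
          apply Nat.mul_lt_mul_right (Nat.pow_pos (by norm_num)) |>.2 h1
      _ = 2 ^ n := by rw [← pow_add]; congr 1; omega
  omega


lemma exists_neg_sign_perm {γ : Type*} [Fintype γ] [DecidableEq γ] [Nonempty γ]
    (h : γ → γ) (x : γ → Bool) (hflip : ∀ a, x (h a) ≠ x a) :
    ∃ σ : Equiv.Perm γ, Equiv.Perm.sign σ = -1 ∧ ∀ a, σ a = a ∨ σ a = h a := by
  classical
  have hne : ∀ a, h a ≠ a := fun a hha => hflip a (by rw [hha])
  -- find a periodic point
  have hper : ∃ (z : γ) (t : ℕ), 0 < t ∧ h^[t] z = z := by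
    obtain ⟨i, j, hij, heq⟩ := Fintype.exists_ne_map_eq_of_card_lt
      (fun k : Fin (Fintype.card γ + 1) => h^[(k : ℕ)] (Classical.arbitrary γ)) (by simp)
    rcases lt_trichotomy (i : ℕ) (j : ℕ) with hlt | hEq | hgt
    · refine ⟨h^[(i : ℕ)] (Classical.arbitrary γ), (j : ℕ) - (i : ℕ), by omega, ?_⟩
      rw [← Function.iterate_add_apply]
      have : (j : ℕ) - (i : ℕ) + (i : ℕ) = (j : ℕ) := by omega
      rw [this]; exact heq.symm
    · exact absurd (Fin.ext hEq) hij
    · refine ⟨h^[(j : ℕ)] (Classical.arbitrary γ), (i : ℕ) - (j : ℕ), by omega, ?_⟩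
      rw [← Function.iterate_add_apply]
      have : (i : ℕ) - (j : ℕ) + (j : ℕ) = (i : ℕ) := by omega
      rw [this]; exact heq
  obtain ⟨z, hexT⟩ := hper
  set T := Nat.find hexT with hTdef
  obtain ⟨hT0, hTz⟩ : 0 < T ∧ h^[T] z = z := Nat.find_spec hexT
  have hTmin : ∀ t, t < T → ¬(0 < t ∧ h^[t] z = z) := fun t ht => Nat.find_min hexT ht
  -- colors alternate along the iteration
  have hcol2 : ∀ k, x (h^[2 * k] z) = x z := by
    intro k
    induction k with
    | zero => rfl
    | succ m ih =>
        have e1 : 2 * (m + 1) = (2 * m + 1) + 1 := by ring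
        rw [e1, Function.iterate_succ_apply', Function.iterate_succ_apply']
        have f1 := hflip (h^[2 * m] z)
        have f2 := hflip (h (h^[2 * m] z))
        rw [← ih]
        revert f1 f2
        cases x (h (h (h^[2 * m] z))) <;> cases x (h (h^[2 * m] z)) <;>
          cases x (h^[2 * m] z) <;> simp
  have hTeven : Even T := by
    by_contra hodd
    obtain ⟨m, hm⟩ : Odd T := Nat.not_even_iff_odd.1 hodd
    have hm' : T = 2 * m + 1 := hm
    have h1 : x (h^[T] z) = x z := by rw [hTz]
    have e : h^[2 * m + 1] z = h (h^[2 * m] z) := Function.iterate_succ_apply' h (2 * m) z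
    rw [hm', e] at h1
    have h2 := hflip (h^[2 * m] z)
    rw [hcol2 m] at h2
    exact h2 h1
  have hT2 : 2 ≤ T := by
    have := Nat.even_iff.1 hTeven
    omega
  -- the cycle support
  set W : Finset γ := (Finset.range T).image (fun s => h^[s] z) with hW
  have hzW : z ∈ W := Finset.mem_image.2 ⟨0, Finset.mem_range.2 hT0, rfl⟩
  have hclose : ∀ a ∈ W, h a ∈ W := by
    intro a ha
    obtain ⟨s, hs, rfl⟩ := Finset.mem_image.1 ha
    rw [Finset.mem_range] at hs
    have e : h (h^[s] z) = h^[s + 1] z := (Function.iterate_succ_apply' h s z).symm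
    rw [e]
    rcases Nat.lt_or_ge (s + 1) T with h1 | h1
    · exact Finset.mem_image.2 ⟨s + 1, Finset.mem_range.2 h1, rfl⟩
    · have : s + 1 = T := by omega
      rw [this, hTz]
      exact hzW
  have hcloseIter : ∀ k, ∀ a ∈ W, h^[k] a ∈ W := by
    intro k
    induction k with
    | zero => intro a ha; exact ha
    | succ m ih =>
        intro a ha
        rw [Function.iterate_succ_apply']
        exact hclose _ (ih a ha)
  have hperW : ∀ a ∈ W, h^[T] a = a := by
    intro a ha
    obtain ⟨s, _, rfl⟩ := Finset.mem_image.1 ha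
    rw [← Function.iterate_add_apply, Nat.add_comm, Function.iterate_add_apply, hTz]
  -- build the permutation
  set p : γ → γ := fun a => if a ∈ W then h a else a with hp
  set q : γ → γ := fun a => if a ∈ W then h^[T - 1] a else a with hq
  have hqp : Function.LeftInverse q p := by
    intro a
    by_cases ha : a ∈ W
    · rw [hp, hq]
      simp only [if_pos ha, if_pos (hclose a ha)]
      have : h^[T - 1] (h a) = h^[T] a := by
        rw [← Function.iterate_succ_apply]
        congr 1
        omega
      rw [this, hperW a ha]
    · rw [hp, hq]; simp only [if_neg ha]
  have hpq : Function.RightInverse q p := by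
    intro a
    by_cases ha : a ∈ W
    · rw [hp, hq]
      simp only [if_pos ha, if_pos (hcloseIter (T - 1) a ha)]
      have : h (h^[T - 1] a) = h^[T] a := by
        rw [(Function.iterate_succ_apply' h (T - 1) a).symm]
        congr 1
        omega
      rw [this, hperW a ha]
    · rw [hp, hq]; simp only [if_neg ha]
  set σ : Equiv.Perm γ := ⟨p, q, hqp, hpq⟩ with hσ
  have hσapp : ∀ a, σ a = if a ∈ W then h a else a := fun a => rfl
  have hprop : ∀ a, σ a = a ∨ σ a = h a := by
    intro a
    by_cases ha : a ∈ W
    · right; rw [hσapp, if_pos ha]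
    · left; rw [hσapp, if_neg ha]
  have hsupp : σ.support = W := by
    ext a
    rw [Equiv.Perm.mem_support, hσapp]
    by_cases ha : a ∈ W
    · simp only [if_pos ha]
      exact ⟨fun _ => ha, fun _ => hne a⟩
    · simp only [if_neg ha]
      exact ⟨fun hc => absurd rfl hc, fun hc => absurd hc ha⟩
  -- σ is a cycle
  have hpow : ∀ s : ℕ, (σ ^ s) z = h^[s] z := by
    intro s
    induction s with
    | zero => rfl
    | succ m ih =>
        rw [pow_succ', Equiv.Perm.mul_apply, ih, hσapp, if_pos (hcloseIter m z hzW)]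
        exact (Function.iterate_succ_apply' h m z).symm
  have hcyc : σ.IsCycle := by
    refine ⟨z, ?_, ?_⟩
    · rw [hσapp, if_pos hzW]; exact hne z
    · intro y hy
      have hyW : y ∈ W := by
        by_contra hyW
        rw [hσapp, if_neg hyW] at hy
        exact hy rfl
      obtain ⟨s, _, rfl⟩ := Finset.mem_image.1 hyW
      exact ⟨(s : ℤ), by rw [zpow_natCast, hpow]⟩
  -- count W
  have hWcard : W.card = T := by
    rw [hW]
    rw [Finset.card_image_of_injOn, Finset.card_range]
    intro s hs s' hs' heq
    have heq' : h^[s] z = h^[s'] z := heq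
    rw [Finset.mem_coe, Finset.mem_range] at hs hs'
    by_contra hne'
    rcases lt_trichotomy s s' with hlt | hEq | hgt
    · have hz2 : h^[(T - s') + s] z = z := by
        rw [Function.iterate_add_apply, heq', ← Function.iterate_add_apply]
        have e : T - s' + s' = T := by omega
        rw [e, hTz]
      exact hTmin _ (by omega) ⟨by omega, hz2⟩
    · exact hne' hEq
    · have hz2 : h^[(T - s) + s'] z = z := by
        rw [Function.iterate_add_apply, ← heq', ← Function.iterate_add_apply]
        have e : T - s + s = T := by omega
        rw [e, hTz]
      exact hTmin _ (by omega) ⟨by omega, hz2⟩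
  refine ⟨σ, ?_, hprop⟩
  rw [hcyc.sign, hsupp, hWcard, Even.neg_one_pow hTeven]



/-- The 2-factor formed by two perfect matchings `u, w : A ≃ B`. -/
def pairGraph {V : Type*} (A B : Set V) (u w : ↥A ≃ ↥B) : SimpleGraph V :=
  SimpleGraph.fromRel (fun x y => ∃ h : x ∈ A, y = ↑(u ⟨x, h⟩) ∨ y = ↑(w ⟨x, h⟩))

section PG

variable {V : Type*} {A B : Set V}

lemma pg_notB (hdisj : Disjoint A B) {v : V} (hv : v ∈ A) : v ∉ B :=
  fun hv' => Set.disjoint_left.1 hdisj hv hv'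

lemma pg_memB (hunion : A ∪ B = Set.univ) {v : V} (hv : v ∉ A) : v ∈ B := by
  have h1 : v ∈ A ∪ B := by rw [hunion]; trivial
  rcases h1 with h1 | h1
  · exact absurd h1 hv
  · exact h1

lemma pg_dist' (u w : ↥A ≃ ↥B) (hdist : ∀ a, u a ≠ w a) (b : ↥B) :
    u.symm b ≠ w.symm b := by
  intro heq
  apply hdist (w.symm b)
  have h1 : u (u.symm b) = b := u.apply_symm_apply b
  have h2 : w (w.symm b) = b := w.apply_symm_apply b
  rw [heq] at h1
  rw [h1, h2]

lemma pg_adj (u w : ↥A ≃ ↥B) {x y : V} :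
    (pairGraph A B u w).Adj x y ↔ x ≠ y ∧
      ((∃ h : x ∈ A, y = ↑(u ⟨x, h⟩) ∨ y = ↑(w ⟨x, h⟩)) ∨
       (∃ h : y ∈ A, x = ↑(u ⟨y, h⟩) ∨ x = ↑(w ⟨y, h⟩))) := by
  rw [pairGraph, SimpleGraph.fromRel_adj]

lemma pg_adj_u (hdisj : Disjoint A B) (u w : ↥A ≃ ↥B) (a : ↥A) :
    (pairGraph A B u w).Adj ↑a ↑(u a) := by
  rw [pg_adj]
  constructor
  · intro heq
    exact pg_notB hdisj a.2 (heq ▸ (u a).2)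
  · exact Or.inl ⟨a.2, Or.inl (by rw [Subtype.eta])⟩

lemma pg_adj_w (hdisj : Disjoint A B) (u w : ↥A ≃ ↥B) (a : ↥A) :
    (pairGraph A B u w).Adj ↑a ↑(w a) := by
  rw [pg_adj]
  constructor
  · intro heq
    exact pg_notB hdisj a.2 (heq ▸ (w a).2)
  · exact Or.inl ⟨a.2, Or.inr (by rw [Subtype.eta])⟩

lemma pg_nbrA (hdisj : Disjoint A B) (u w : ↥A ≃ ↥B) {v : V} (hv : v ∈ A) :
    (pairGraph A B u w).neighborSet v = {↑(u ⟨v, hv⟩), ↑(w ⟨v, hv⟩)} := by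
  ext y
  simp only [SimpleGraph.mem_neighborSet, Set.mem_insert_iff, Set.mem_singleton_iff]
  constructor
  · intro hadj
    rw [pg_adj] at hadj
    obtain ⟨hne, h | h⟩ := hadj
    · obtain ⟨h1, h2⟩ := h
      exact h2
    · obtain ⟨h1, h2⟩ := h
      exfalso
      rcases h2 with h2 | h2
      · exact pg_notB hdisj hv (h2 ▸ (u ⟨y, h1⟩).2)
      · exact pg_notB hdisj hv (h2 ▸ (w ⟨y, h1⟩).2)
  · rintro (rfl | rfl)
    · exact pg_adj_u hdisj u w ⟨v, hv⟩
    · exact pg_adj_w hdisj u w ⟨v, hv⟩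

lemma pg_nbrB (hdisj : Disjoint A B) (u w : ↥A ≃ ↥B) {v : V} (hv : v ∈ B) :
    (pairGraph A B u w).neighborSet v = {↑(u.symm ⟨v, hv⟩), ↑(w.symm ⟨v, hv⟩)} := by
  have hvA : v ∉ A := fun hvA => pg_notB hdisj hvA hv
  ext y
  simp only [SimpleGraph.mem_neighborSet, Set.mem_insert_iff, Set.mem_singleton_iff]
  constructor
  · intro hadj
    rw [pg_adj] at hadj
    obtain ⟨hne, h | h⟩ := hadj
    · exact absurd h.1 hvA
    · obtain ⟨h1, h2⟩ := h
      rcases h2 with h2 | h2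
      · left
        have : u ⟨y, h1⟩ = ⟨v, hv⟩ := Subtype.ext h2.symm
        rw [← this, Equiv.symm_apply_apply]
      · right
        have : w ⟨y, h1⟩ = ⟨v, hv⟩ := Subtype.ext h2.symm
        rw [← this, Equiv.symm_apply_apply]
  · rintro (rfl | rfl)
    · have := pg_adj_u hdisj u w (u.symm ⟨v, hv⟩)
      rw [Equiv.apply_symm_apply] at this
      exact this.symm
    · have := pg_adj_w hdisj u w (w.symm ⟨v, hv⟩)
      rw [Equiv.apply_symm_apply] at this
      exact this.symm

lemma pg_le (hdisj : Disjoint A B) (u w : ↥A ≃ ↥B) (G : SimpleGraph V)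
    (hu : ∀ a : ↥A, G.Adj ↑a ↑(u a)) (hw : ∀ a : ↥A, G.Adj ↑a ↑(w a)) :
    pairGraph A B u w ≤ G := by
  intro x y hadj
  rw [pg_adj] at hadj
  obtain ⟨hne, h | h⟩ := hadj
  · obtain ⟨h1, h2⟩ := h
    rcases h2 with rfl | rfl
    · exact hu ⟨x, h1⟩
    · exact hw ⟨x, h1⟩
  · obtain ⟨h1, h2⟩ := h
    rcases h2 with rfl | rfl
    · exact (hu ⟨y, h1⟩).symm
    · exact (hw ⟨y, h1⟩).symm

lemma pg_deg (hunion : A ∪ B = Set.univ) (hdisj : Disjoint A B)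
    (u w : ↥A ≃ ↥B) (hdist : ∀ a, u a ≠ w a) (v : V) :
    ((pairGraph A B u w).neighborSet v).ncard = 2 := by
  by_cases hv : v ∈ A
  · rw [pg_nbrA hdisj u w hv]
    apply Set.ncard_pair
    intro heq
    exact hdist ⟨v, hv⟩ (Subtype.ext heq)
  · have hvB : v ∈ B := pg_memB hunion hv
    rw [pg_nbrB hdisj u w hvB]
    apply Set.ncard_pair
    intro heq
    exact pg_dist' u w hdist ⟨v, hvB⟩ (Subtype.ext heq)

end PG

section PG2

variable {V : Type*} {A B : Set V}

lemma pg_numCycles (hunion : A ∪ B = Set.univ) (hdisj : Disjoint A B)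
    (u w : ↥A ≃ ↥B) :
    Nat.card (pairGraph A B u w).ConnectedComponent = permOrbits (u.trans w.symm) := by
  classical
  set ρ : Equiv.Perm ↥A := u.trans w.symm with hρ
  letI S : Setoid ↥A := sameCycleSetoid ρ
  have hρa : ∀ a : ↥A, ρ a = w.symm (u a) := fun a => rfl
  set toA : V → ↥A := fun v => if hv : v ∈ A then ⟨v, hv⟩ else w.symm ⟨v, pg_memB hunion hv⟩
    with htoA
  set Φ : V → Quotient S := fun v => Quotient.mk S (toA v) with hΦ
  have htoA_A : ∀ (v : V) (hv : v ∈ A), toA v = ⟨v, hv⟩ := fun v hv => dif_pos hv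
  have htoA_B : ∀ (b : ↥B), toA ↑b = w.symm b := by
    intro b
    have hvA : (↑b : V) ∉ A := fun hA => pg_notB hdisj hA b.2
    rw [htoA]
    simp only [dif_neg hvA]
  have hΦrel : ∀ x y : V, (∃ h : x ∈ A, y = ↑(u ⟨x, h⟩) ∨ y = ↑(w ⟨x, h⟩)) → Φ x = Φ y := by
    rintro x y ⟨hx, hy⟩
    rcases hy with rfl | rfl
    · -- y = u x
      apply Quotient.sound
      show ρ.SameCycle (toA x) (toA ↑(u ⟨x, hx⟩))
      rw [htoA_A x hx, htoA_B (u ⟨x, hx⟩)]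
      exact ⟨1, by rw [zpow_one, hρa]⟩
    · -- y = w x
      have heq : toA ↑(w ⟨x, hx⟩) = toA x := by
        rw [htoA_B (w ⟨x, hx⟩), Equiv.symm_apply_apply, htoA_A x hx]
      exact (congrArg (Quotient.mk S) heq).symm
  have hΦadj : ∀ x y : V, (pairGraph A B u w).Adj x y → Φ x = Φ y := by
    intro x y hadj
    rw [pg_adj] at hadj
    rcases hadj.2 with h | h
    · exact hΦrel x y h
    · exact (hΦrel y x h).symm
  have hΦwalk : ∀ {x y : V}, (pairGraph A B u w).Walk x y → Φ x = Φ y := by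
    intro x y p
    induction p with
    | nil => rfl
    | cons hadj p ih => exact (hΦadj _ _ hadj).trans ih
  -- reachability from same-cycle
  have hstep : ∀ a : ↥A, (pairGraph A B u w).Reachable ↑a ↑(ρ a) := by
    intro a
    have h1 : (pairGraph A B u w).Adj ↑a ↑(u a) := pg_adj_u hdisj u w a
    have h2 : (pairGraph A B u w).Adj ↑(ρ a) ↑(u a) := by
      have e : w (ρ a) = u a := by rw [hρa]; exact w.apply_symm_apply _
      have h3 := pg_adj_w hdisj u w (ρ a)
      rwa [e] at h3
    exact h1.reachable.trans h2.reachable.symm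
  have hzpow : ∀ (i : ℤ) (a : ↥A), (pairGraph A B u w).Reachable ↑a ↑((ρ ^ i) a) := by
    intro i
    induction i using Int.induction_on with
    | zero =>
        intro a
        simp only [zpow_zero, Equiv.Perm.one_apply]
        exact SimpleGraph.Reachable.refl _
    | succ i ih =>
        intro a
        have e : (ρ ^ ((i : ℤ) + 1)) a = (ρ ^ (i : ℤ)) (ρ a) := by
          rw [zpow_add_one]; rfl
        rw [e]
        exact (hstep a).trans (ih (ρ a))
    | pred i ih =>
        intro a
        have e : (ρ ^ (-(i : ℤ) - 1)) a = (ρ ^ (-(i : ℤ))) (ρ⁻¹ a) := by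
          rw [zpow_sub_one]; rfl
        rw [e]
        have h4 := hstep (ρ⁻¹ a)
        rw [show (↑(ρ (ρ⁻¹ a)) : V) = ↑a from congrArg _ (Equiv.apply_symm_apply ρ a)] at h4
        exact h4.symm.trans (ih (ρ⁻¹ a))
  have hinvresp : ∀ a b : ↥A, ρ.SameCycle a b →
      (pairGraph A B u w).connectedComponentMk ↑a = (pairGraph A B u w).connectedComponentMk ↑b := by
    rintro a b ⟨i, hi⟩
    apply SimpleGraph.ConnectedComponent.sound
    rw [← hi]
    exact hzpow i a
  set eqv : (pairGraph A B u w).ConnectedComponent ≃ Quotient S :=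
    { toFun := SimpleGraph.ConnectedComponent.lift Φ (fun v w' p _ => hΦwalk p)
      invFun := Quotient.lift (fun a : ↥A => (pairGraph A B u w).connectedComponentMk ↑a)
        (fun a b hab => hinvresp a b hab)
      left_inv := by
        intro c
        induction c using SimpleGraph.ConnectedComponent.ind with
        | _ v =>
          show Quotient.lift _ _ (Φ v) = _
          rw [hΦ]
          simp only [Quotient.lift_mk]
          by_cases hv : v ∈ A
          · rw [htoA_A v hv]
          · have hvB : v ∈ B := pg_memB hunion hv
            have : toA v = toA ↑(⟨v, hvB⟩ : ↥B) := rfl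
            rw [this, htoA_B ⟨v, hvB⟩]
            apply SimpleGraph.ConnectedComponent.sound
            have h5 := pg_adj_w hdisj u w (w.symm ⟨v, hvB⟩)
            rw [show (↑(w (w.symm ⟨v, hvB⟩)) : V) = v from congrArg _ (w.apply_symm_apply _)] at h5
            exact h5.reachable
      right_inv := by
        intro q
        induction q using Quotient.ind with
        | _ a =>
          show SimpleGraph.ConnectedComponent.lift Φ _ ((pairGraph A B u w).connectedComponentMk ↑a)
            = _
          show Φ ↑a = _
          rw [hΦ]
          simp only
          rw [htoA_A ↑a a.2] }
  rw [permOrbits]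
  exact Nat.card_congr eqv

end PG2


theorem pseudo_bipartite_min_degree {V : Type*} [Fintype V] [Nonempty V]
    (G : SimpleGraph V) (A B : Set V) (n : ℕ)
    (hunion : A ∪ B = Set.univ) (hdisj : Disjoint A B)
    (hAdj : ∀ a b, G.Adj a b → (a ∈ A ∧ b ∈ B) ∨ (a ∈ B ∧ b ∈ A))
    (hA : A.ncard = n) (hB : B.ncard = n)
    (hG : PseudoTwoFactorIso G) :
    ∃ v, (G.neighborSet v).ncard ≤ Nat.log 2 n + 2 := by
  classical
  obtain ⟨F, hFle, hFdeg⟩ := hG.1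
  by_contra hcon
  push_neg at hcon
  letI : Fintype ↥A := A.toFinite.fintype
  letI : Fintype ↥B := B.toFinite.fintype
  have hcardA : Fintype.card ↥A = n := by
    rw [← Nat.card_eq_fintype_card, Nat.card_coe_set_eq, hA]
  have hcardB : Fintype.card ↥B = n := by
    rw [← Nat.card_eq_fintype_card, Nat.card_coe_set_eq, hB]
  have hnpos : 0 < n := by
    by_contra h0
    have hn0 : n = 0 := by omega
    have hAe : A = ∅ := by
      have h := hA; rw [hn0] at h
      exact (Set.ncard_eq_zero A.toFinite).1 h
    have hBe : B = ∅ := by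
      have h := hB; rw [hn0] at h
      exact (Set.ncard_eq_zero B.toFinite).1 h
    obtain v := Classical.arbitrary V
    have hv : v ∈ A ∪ B := by rw [hunion]; trivial
    rw [hAe, hBe] at hv
    simp at hv
  haveI hne : Nonempty ↥A := by
    rw [← Fintype.card_pos_iff, hcardA]; exact hnpos
  -- F-neighbours of A-vertices lie in B, and vice versa
  have hGFB : ∀ (a : ↥A) (v : V), F.Adj ↑a v → v ∈ B := by
    intro a v hadj
    rcases hAdj _ _ (hFle hadj) with ⟨_, hv⟩ | ⟨ha, _⟩
    · exact hv
    · exact absurd ha (pg_notB hdisj a.2)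
  have hGFA : ∀ (b : ↥B) (v : V), F.Adj ↑b v → v ∈ A := by
    intro b v hadj
    rcases hAdj _ _ (hFle hadj) with ⟨hb, _⟩ | ⟨_, hv⟩
    · exact absurd b.2 (pg_notB hdisj hb)
    · exact hv
  have hGadjB : ∀ (a : ↥A) (v : V), G.Adj ↑a v → v ∈ B := by
    intro a v hadj
    rcases hAdj _ _ hadj with ⟨_, hv⟩ | ⟨ha, _⟩
    · exact hv
    · exact absurd ha (pg_notB hdisj a.2)
  -- the F-neighbourhood Finsets
  set r : ↥A → Finset ↥B := fun a => Finset.univ.filter (fun b => F.Adj ↑a ↑b) with hrdef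
  set r' : ↥B → Finset ↥A := fun b => Finset.univ.filter (fun a => F.Adj ↑b ↑a) with hr'def
  have hncard2 : ∀ v : V, Nat.card ↥(F.neighborSet v) = 2 := by
    intro v
    rw [Nat.card_coe_set_eq, hFdeg]
  have hr2 : ∀ a : ↥A, (r a).card = 2 := by
    intro a
    have eqv : ↥(F.neighborSet (↑a : V)) ≃ ↥(r a) := by
      refine ⟨fun y => ⟨⟨y.1, hGFB a y.1 y.2⟩, ?_⟩, fun b => ⟨↑b.1, ?_⟩, ?_, ?_⟩
      · exact Finset.mem_filter.2 ⟨Finset.mem_univ _, y.2⟩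
      · exact (Finset.mem_filter.1 b.2).2
      · intro y; apply Subtype.ext; rfl
      · intro b; apply Subtype.ext; apply Subtype.ext; rfl
    rw [← Fintype.card_coe, ← Nat.card_eq_fintype_card, ← Nat.card_congr eqv, hncard2]
  have hr'2 : ∀ b : ↥B, (r' b).card = 2 := by
    intro b
    have eqv : ↥(F.neighborSet (↑b : V)) ≃ ↥(r' b) := by
      refine ⟨fun y => ⟨⟨y.1, hGFA b y.1 y.2⟩, ?_⟩, fun a => ⟨↑a.1, ?_⟩, ?_, ?_⟩
      · exact Finset.mem_filter.2 ⟨Finset.mem_univ _, y.2⟩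
      · exact (Finset.mem_filter.1 a.2).2
      · intro y; apply Subtype.ext; rfl
      · intro a; apply Subtype.ext; apply Subtype.ext; rfl
    rw [← Fintype.card_coe, ← Nat.card_eq_fintype_card, ← Nat.card_congr eqv, hncard2]
  -- Hall's condition
  have hall : ∀ S : Finset ↥A, S.card ≤ (S.biUnion r).card := by
    intro S
    set T := S.biUnion r with hT
    set P : Finset (↥A × ↥B) := (S ×ˢ T).filter (fun p => F.Adj ↑p.1 ↑p.2) with hP
    have hfst : ∀ p ∈ P, p.1 ∈ S := fun p hp =>
      (Finset.mem_product.1 (Finset.mem_filter.1 hp).1).1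
    have hsnd : ∀ p ∈ P, p.2 ∈ T := fun p hp =>
      (Finset.mem_product.1 (Finset.mem_filter.1 hp).1).2
    have h1 : P.card = ∑ a ∈ S, (P.filter (fun p => p.1 = a)).card :=
      Finset.card_eq_sum_card_fiberwise hfst
    have h2 : P.card = ∑ b ∈ T, (P.filter (fun p => p.2 = b)).card :=
      Finset.card_eq_sum_card_fiberwise hsnd
    have hfib1 : ∀ a ∈ S, (P.filter (fun p => p.1 = a)).card = 2 := by
      intro a haS
      rw [← hr2 a]
      apply Finset.card_bij (fun p _ => p.2)
      · intro p hp
        simp only [Finset.mem_filter] at hp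
        obtain ⟨hp1, hp2⟩ := hp
        have hadj := (Finset.mem_filter.1 hp1).2
        rw [hp2] at hadj
        exact Finset.mem_filter.2 ⟨Finset.mem_univ _, hadj⟩
      · intro p1 hp1 p2 hp2 hsndeq
        have e1 := (Finset.mem_filter.1 hp1).2
        have e2 := (Finset.mem_filter.1 hp2).2
        exact Prod.ext (e1.trans e2.symm) hsndeq
      · intro b hb
        have hadj : F.Adj ↑a ↑b := (Finset.mem_filter.1 hb).2
        have hbT : b ∈ T := Finset.mem_biUnion.2 ⟨a, haS, hb⟩
        refine ⟨(a, b), ?_, rfl⟩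
        exact Finset.mem_filter.2
          ⟨Finset.mem_filter.2 ⟨Finset.mem_product.2 ⟨haS, hbT⟩, hadj⟩, rfl⟩
    have hfib2 : ∀ b ∈ T, (P.filter (fun p => p.2 = b)).card ≤ 2 := by
      intro b hbT
      rw [← hr'2 b]
      apply Finset.card_le_card_of_injOn (fun p => p.1)
      · intro p hp
        simp only [Finset.mem_coe, Finset.mem_filter] at hp
        have hadj := (Finset.mem_filter.1 hp.1).2
        rw [hp.2] at hadj
        exact Finset.mem_coe.2 (Finset.mem_filter.2 ⟨Finset.mem_univ _, hadj.symm⟩)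
      · intro p1 hp1 p2 hp2 hfsteq
        simp only [Finset.mem_coe, Finset.mem_filter] at hp1 hp2
        exact Prod.ext hfsteq (hp1.2.trans hp2.2.symm)
    have e1 : P.card = 2 * S.card := by
      rw [h1, Finset.sum_congr rfl hfib1, Finset.sum_const, smul_eq_mul, mul_comm]
    have e2 : P.card ≤ 2 * T.card := by
      rw [h2]
      calc ∑ b ∈ T, (P.filter (fun p => p.2 = b)).card ≤ ∑ _b ∈ T, 2 :=
            Finset.sum_le_sum hfib2
        _ = 2 * T.card := by rw [Finset.sum_const, smul_eq_mul, mul_comm]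
    omega
  -- the first perfect matching
  obtain ⟨f, hfinj, hfmem⟩ := (Finset.all_card_le_biUnion_card_iff_exists_injective r).1 hall
  have hfbij : Function.Bijective f :=
    (Fintype.bijective_iff_injective_and_card f).2 ⟨hfinj, by rw [hcardA, hcardB]⟩
  set ef : ↥A ≃ ↥B := Equiv.ofBijective f hfbij with hefdef
  have hefAdj : ∀ a : ↥A, F.Adj ↑a ↑(ef a) := by
    intro a
    exact (Finset.mem_filter.1 (hfmem a)).2
  -- the second perfect matching: the other neighbour
  have hex : ∀ a : ↥A, ∃ b : ↥B, ((r a).erase (ef a)) = {b} := by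
    intro a
    apply Finset.card_eq_one.1
    have hmem : ef a ∈ r a := hfmem a
    rw [Finset.card_erase_of_mem hmem, hr2 a]
  choose g hgs using hex
  have hgmem : ∀ a : ↥A, g a ∈ (r a).erase (ef a) := by
    intro a; rw [hgs a]; exact Finset.mem_singleton_self _
  have hgne : ∀ a : ↥A, g a ≠ ef a := fun a => (Finset.mem_erase.1 (hgmem a)).1
  have hgadj : ∀ a : ↥A, F.Adj ↑a ↑(g a) := by
    intro a
    exact (Finset.mem_filter.1 (Finset.mem_erase.1 (hgmem a)).2).2
  have hginj : Function.Injective g := by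
    intro a1 a2 h12
    by_contra hne12
    have hb2 : g a2 = g a1 := h12.symm
    have hadj3 : F.Adj ↑(ef.symm (g a1)) ↑(g a1) := by
      have h := hefAdj (ef.symm (g a1))
      rwa [ef.apply_symm_apply] at h
    have h31 : ef.symm (g a1) ≠ a1 := by
      intro he
      exact hgne a1 ((Equiv.symm_apply_eq ef).1 he)
    have h32 : ef.symm (g a1) ≠ a2 := by
      intro he
      exact hgne a2 (hb2.trans ((Equiv.symm_apply_eq ef).1 he))
    have hsub : ({a1, a2, ef.symm (g a1)} : Finset ↥A) ⊆ r' (g a1) := by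
      intro c hc
      simp only [Finset.mem_insert, Finset.mem_singleton] at hc
      refine Finset.mem_filter.2 ⟨Finset.mem_univ _, ?_⟩
      rcases hc with h | h | h
      · subst h; exact (hgadj c).symm
      · subst h; rw [← hb2]; exact (hgadj c).symm
      · subst h; exact hadj3.symm
    have hcard3 : ({a1, a2, ef.symm (g a1)} : Finset ↥A).card = 3 :=
      Finset.card_eq_three.2 ⟨a1, a2, ef.symm (g a1), hne12,
        fun h => h31 h.symm, fun h => h32 h.symm, rfl⟩
    have hle := Finset.card_le_card hsub
    rw [hcard3, hr'2] at hle
    omega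
  have hgbij : Function.Bijective g :=
    (Fintype.bijective_iff_injective_and_card g).2 ⟨hginj, by rw [hcardA, hcardB]⟩
  set eg : ↥A ≃ ↥B := Equiv.ofBijective g hgbij with hegdef
  have hegAdj : ∀ a : ↥A, F.Adj ↑a ↑(eg a) := hgadj
  have hdist : ∀ a : ↥A, ef a ≠ eg a := fun a h => hgne a h.symm
  set π₀ : Equiv.Perm ↥A := ef.trans eg.symm with hπdef
  have hπfix : ∀ a : ↥A, π₀ a ≠ a := by
    intro a h
    apply hdist a
    have h2 := congrArg eg h
    rw [show eg (π₀ a) = ef a from eg.apply_symm_apply (ef a)] at h2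
    exact h2
  -- the digraph of allowed replacements
  set O : ↥A → Finset ↥A :=
    fun a => Finset.univ.filter (fun c : ↥A => G.Adj ↑a ↑(eg c) ∧ c ≠ a ∧ c ≠ π₀ a) with hOdef
  have hOmem : ∀ (a c : ↥A), c ∈ O a → G.Adj ↑a ↑(eg c) ∧ c ≠ a ∧ c ≠ π₀ a := by
    intro a c hc
    exact (Finset.mem_filter.1 hc).2
  have hOself : ∀ a : ↥A, a ∉ O a := by
    intro a ha
    exact (hOmem a a ha).2.1 rfl
  have hOcard : ∀ a : ↥A, Nat.log 2 n + 1 ≤ (O a).card := by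
    intro a
    set Of : Finset ↥A := Finset.univ.filter (fun c : ↥A => G.Adj ↑a ↑(eg c)) with hOfdef
    have hOfcard : Of.card = (G.neighborSet (↑a : V)).ncard := by
      have eqv : ↥(G.neighborSet (↑a : V)) ≃ ↥Of := by
        refine ⟨fun y => ⟨eg.symm ⟨y.1, hGadjB a y.1 y.2⟩, ?_⟩, fun c => ⟨↑(eg c.1), ?_⟩, ?_, ?_⟩
        · refine Finset.mem_filter.2 ⟨Finset.mem_univ _, ?_⟩
          rw [eg.apply_symm_apply]
          exact y.2
        · exact (Finset.mem_filter.1 c.2).2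
        · intro y
          apply Subtype.ext
          show (↑(eg (eg.symm ⟨y.1, hGadjB a y.1 y.2⟩)) : V) = y.1
          rw [eg.apply_symm_apply]
        · intro c
          apply Subtype.ext
          rw [Equiv.symm_apply_eq]
      rw [← Nat.card_coe_set_eq, Nat.card_congr eqv, Nat.card_eq_fintype_card,
        Fintype.card_coe]
    have hdeg : Nat.log 2 n + 2 < (G.neighborSet (↑a : V)).ncard := hcon ↑a
    have hsub : Of ⊆ O a ∪ {a, π₀ a} := by
      intro c hc
      rw [Finset.mem_union]
      by_cases h1 : c = a
      · right; simp [h1]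
      by_cases h2 : c = π₀ a
      · right; simp [h2]
      left
      exact Finset.mem_filter.2 ⟨Finset.mem_univ _, (Finset.mem_filter.1 hc).2, h1, h2⟩
    have hpair : ({a, π₀ a} : Finset ↥A).card ≤ 2 := by
      apply le_trans (Finset.card_insert_le _ _)
      rw [Finset.card_singleton]
    have hle : Of.card ≤ (O a).card + 2 := by
      calc Of.card ≤ (O a ∪ {a, π₀ a}).card := Finset.card_le_card hsub
        _ ≤ (O a).card + ({a, π₀ a} : Finset ↥A).card := Finset.card_union_le _ _
        _ ≤ (O a).card + 2 := by omega
    omega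
  -- a good 2-colouring and the flip function
  obtain ⟨x, hx⟩ := exists_good_coloring O hOself (by intro a; rw [hcardA]; exact hOcard a)
  have hch : ∀ a : ↥A, ∃ b, b ∈ O a ∧ x b ≠ x a := by
    intro a
    obtain ⟨b, hb1, hb2⟩ := hx a
    exact ⟨b, hb1, hb2⟩
  choose hfun hfmem2 hflip using hch
  obtain ⟨σ, hσsign, hσprop⟩ := exists_neg_sign_perm hfun x hflip
  have hσT : ∀ a : ↥A, G.Adj ↑a ↑(eg (σ a)) := by
    intro a
    rcases hσprop a with h | h
    · rw [h]; exact hFle (hegAdj a)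
    · rw [h]; exact (hOmem a _ (hfmem2 a)).1
  have hσdist : ∀ a : ↥A, (σ.trans eg) a ≠ ef a := by
    intro a h
    have h2 : σ a = π₀ a := by
      have h3 := congrArg eg.symm (show eg (σ a) = ef a from h)
      rw [eg.symm_apply_apply] at h3
      exact h3
    rcases hσprop a with h4 | h4
    · rw [h4] at h2; exact hπfix a h2.symm
    · rw [h4] at h2; exact (hOmem a _ (hfmem2 a)).2.2 h2
  -- the two 2-factors
  have hTF1 : IsTwoFactor G (pairGraph A B ef eg) :=
    ⟨pg_le hdisj ef eg G (fun a => hFle (hefAdj a)) (fun a => hFle (hegAdj a)),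
     pg_deg hunion hdisj ef eg hdist⟩
  have hTF2 : IsTwoFactor G (pairGraph A B (σ.trans eg) ef) :=
    ⟨pg_le hdisj (σ.trans eg) ef G (fun a => hσT a) (fun a => hFle (hefAdj a)),
     pg_deg hunion hdisj (σ.trans eg) ef hσdist⟩
  set ρ₂ : Equiv.Perm ↥A := (σ.trans eg).trans ef.symm with hρ₂def
  have hNC1 : numCycles (pairGraph A B ef eg) = permOrbits π₀ :=
    pg_numCycles hunion hdisj ef eg
  have hNC2 : numCycles (pairGraph A B (σ.trans eg) ef) = permOrbits ρ₂ :=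
    pg_numCycles hunion hdisj (σ.trans eg) ef
  have hpar := hG.2 _ _ hTF1 hTF2
  rw [hNC1, hNC2] at hpar
  have hsigneq : Equiv.Perm.sign π₀ = Equiv.Perm.sign ρ₂ := by
    rw [sign_eq_pow_orbits π₀, sign_eq_pow_orbits ρ₂]
    exact neg_one_pow_congr' (by omega)
  have hρ₂ : ρ₂ = π₀⁻¹ * σ := by
    apply Equiv.ext
    intro a
    rfl
  have hcontr : Equiv.Perm.sign π₀ = Equiv.Perm.sign π₀ * (-1) := by
    calc Equiv.Perm.sign π₀ = Equiv.Perm.sign ρ₂ := hsigneq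
      _ = Equiv.Perm.sign (π₀⁻¹ * σ) := by rw [hρ₂]
      _ = Equiv.Perm.sign π₀⁻¹ * Equiv.Perm.sign σ := map_mul _ _ _
      _ = Equiv.Perm.sign π₀ * (-1) := by rw [Equiv.Perm.sign_inv, hσsign]
  have h1 : (1 : ℤˣ) = -1 := by
    have h2 : Equiv.Perm.sign π₀ * 1 = Equiv.Perm.sign π₀ * (-1) := by
      rw [mul_one]; exact hcontr
    exact mul_left_cancel h2
  exact absurd h1 (by decide)
end

section
/- Let t ≥ 5 be odd and let J(t) be the Flower snark. Then every perfect matching L of J(t) contains exactly one edge from each link L_i = {u_iu_{i+1}, v_iv_{i+1}, w_iw_{i+1}} (indices mod t, with the twisted edges u_tv_1, v_tu_1, w_tw_1 in link L_t). -/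
open SimpleGraph

/-- The Flower snark `J(t)` on vertex set `Fin t × Fin 4`, where `(i, 0)` is the hub
`h_i`, and `(i, 1), (i, 2), (i, 3)` are `u_i, v_i, w_i` respectively (0-indexed
columns `i = 0, ..., t-1`). Edges: spokes `h_i u_i, h_i v_i, h_i w_i`; straight links
`u_i u_{i+1}, v_i v_{i+1}, w_i w_{i+1}` for `i = 0, ..., t-2`; and the twisted link
`u_{t-1} v_0, v_{t-1} u_0, w_{t-1} w_0`. -/
def flowerSnark (t : ℕ) : SimpleGraph (Fin t × Fin 4) :=
  SimpleGraph.fromRel (fun a b =>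
    (a.1 = b.1 ∧ a.2 = 0 ∧ b.2 ≠ 0) ∨
    ((b.1 : ℕ) = (a.1 : ℕ) + 1 ∧ a.2 = b.2 ∧ a.2 ≠ 0) ∨
    ((a.1 : ℕ) = t - 1 ∧ (b.1 : ℕ) = 0 ∧
      ((a.2 = 1 ∧ b.2 = 2) ∨ (a.2 = 2 ∧ b.2 = 1) ∨ (a.2 = 3 ∧ b.2 = 3))))

/-- The `i`-th link of `J(t)`: the set of edges joining column `i` to column
`(i+1) mod t`. -/
def flowerLink (t : ℕ) (i : Fin t) : Set (Sym2 (Fin t × Fin 4)) :=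
  {e | e ∈ (flowerSnark t).edgeSet ∧ ∃ a b : Fin t × Fin 4, e = s(a, b) ∧
    (a.1 : ℕ) = (i : ℕ) ∧ (b.1 : ℕ) = ((i : ℕ) + 1) % t}

namespace FlowerAux

lemma n1 {t n : ℕ} (ht : 2 ≤ t) (hn : n < t) : (n + 1) % t ≠ n := by
  rcases Nat.lt_or_ge (n + 1) t with h | h
  · rw [Nat.mod_eq_of_lt h]; omega
  · have h' : n + 1 = t := by omega
    rw [h', Nat.mod_self]; omega

lemma n2 {t n : ℕ} (ht : 3 ≤ t) (hn : n < t) : ((n + 1) % t + 1) % t ≠ n := by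
  rcases Nat.lt_or_ge (n + 1) t with h | h
  · rw [Nat.mod_eq_of_lt h]
    rcases Nat.lt_or_ge (n + 2) t with h2 | h2
    · rw [Nat.mod_eq_of_lt h2]; omega
    · have h' : n + 2 = t := by omega
      rw [h', Nat.mod_self]; omega
  · have h' : n + 1 = t := by omega
    rw [h', Nat.mod_self, Nat.mod_eq_of_lt (by omega : 1 < t)]; omega

lemma fin4cases : ∀ c : Fin 4, c = 0 ∨ c = 1 ∨ c = 2 ∨ c = 3 := by decide

lemma sameCol {t : ℕ} (ht : 5 ≤ t) {a b : Fin t × Fin 4}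
    (hadj : (flowerSnark t).Adj a b) (hcol : a.1 = b.1) : a.2 = 0 ∨ b.2 = 0 := by
  rw [flowerSnark, SimpleGraph.fromRel_adj] at hadj
  obtain ⟨-, hr⟩ := hadj
  have hv : (a.1 : ℕ) = (b.1 : ℕ) := by rw [hcol]
  have hlt : (a.1 : ℕ) < t := a.1.isLt
  rcases hr with (⟨_, h2, _⟩ | ⟨h1, _, _⟩ | ⟨h1, h2, _⟩) | (⟨_, h2, _⟩ | ⟨h1, _, _⟩ | ⟨h1, h2, _⟩)
  · exact Or.inl h2
  · omega
  · omega
  · exact Or.inr h2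
  · omega
  · omega

lemma hubNb {t : ℕ} {j : Fin t} {w : Fin t × Fin 4}
    (hadj : (flowerSnark t).Adj (j, 0) w) : w.1 = j ∧ w.2 ≠ 0 := by
  rw [flowerSnark, SimpleGraph.fromRel_adj] at hadj
  obtain ⟨-, hr⟩ := hadj
  rcases hr with (⟨h1, h2, h3⟩ | ⟨h1, h2, h3⟩ | ⟨h1, h2, h3⟩) | (⟨h1, h2, h3⟩ | ⟨h1, h2, h3⟩ | ⟨h1, h2, h3⟩)
  · exact ⟨h1.symm, h3⟩
  · exact absurd rfl h3
  · rcases h3 with ⟨h, _⟩ | ⟨h, _⟩ | ⟨h, _⟩ <;> simp at h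
  · exact absurd rfl h3
  · exact absurd (h2.trans rfl) h3
  · rcases h3 with ⟨_, h⟩ | ⟨_, h⟩ | ⟨_, h⟩ <;> simp at h

lemma linkMem {t : ℕ} (ht : 5 ≤ t) {k : Fin t} {e : Sym2 (Fin t × Fin 4)}
    (he : e ∈ flowerLink t k) :
    ∃ a b : Fin t × Fin 4, e = s(a, b) ∧ (a.1 : ℕ) = (k : ℕ) ∧
      (b.1 : ℕ) = ((k : ℕ) + 1) % t ∧ a.2 ≠ 0 ∧ b.2 ≠ 0 ∧ (flowerSnark t).Adj a b := by
  obtain ⟨hes, a, b, hab, ha, hb⟩ := he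
  rw [hab] at hes
  have hadj : (flowerSnark t).Adj a b := hes
  have hcolne : a.1 ≠ b.1 := by
    intro h
    have : (a.1 : ℕ) = (b.1 : ℕ) := by rw [h]
    rw [ha, hb] at this
    exact n1 (by omega) k.isLt this.symm
  have hnz : a.2 ≠ 0 ∧ b.2 ≠ 0 := by
    have h := hadj
    rw [flowerSnark, SimpleGraph.fromRel_adj] at h
    obtain ⟨-, hr⟩ := h
    rcases hr with (⟨h1, _, _⟩ | ⟨_, h2, h3⟩ | ⟨_, _, h3⟩) | (⟨h1, _, _⟩ | ⟨_, h2, h3⟩ | ⟨_, _, h3⟩)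
    · exact absurd h1 hcolne
    · exact ⟨h3, h2 ▸ h3⟩
    · rcases h3 with ⟨h, h'⟩ | ⟨h, h'⟩ | ⟨h, h'⟩ <;>
        exact ⟨by rw [h]; simp, by rw [h']; simp⟩
    · exact absurd h1.symm hcolne
    · exact ⟨h2 ▸ h3, h3⟩
    · rcases h3 with ⟨h, h'⟩ | ⟨h, h'⟩ | ⟨h, h'⟩ <;>
        exact ⟨by rw [h']; simp, by rw [h]; simp⟩
  exact ⟨a, b, hab, ha, hb, hnz.1, hnz.2, hadj⟩

lemma locate {t : ℕ} (ht : 5 ≤ t) {i j : Fin t} (hj : (j : ℕ) = ((i : ℕ) + 1) % t)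
    {v w : Fin t × Fin 4} (hv1 : v.1 = j) (hv2 : v.2 ≠ 0) (hw : w ≠ (j, 0))
    (hadj : (flowerSnark t).Adj v w) :
    s(v, w) ∈ flowerLink t i ∨ s(v, w) ∈ flowerLink t j := by
  have hes : s(v, w) ∈ (flowerSnark t).edgeSet := (flowerSnark t).mem_edgeSet.mpr hadj
  have hadj' := hadj
  rw [flowerSnark, SimpleGraph.fromRel_adj] at hadj'
  obtain ⟨-, hr⟩ := hadj'
  have hvv : (v.1 : ℕ) = (j : ℕ) := by rw [hv1]
  have hit : (i : ℕ) < t := i.isLt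
  have hwt : (w.1 : ℕ) < t := w.1.isLt
  rcases hr with (⟨_, h2, _⟩ | ⟨h1, _, _⟩ | ⟨h1, h2, _⟩) | (⟨h1', h2', h3'⟩ | ⟨h1, _, _⟩ | ⟨h1, h2, _⟩)
  · exact absurd h2 hv2
  · -- w.1 = v.1 + 1 : edge in link j
    right
    refine ⟨hes, v, w, rfl, hvv, ?_⟩
    rw [h1, hvv, Nat.mod_eq_of_lt (by omega)]
  · -- v.1 = t-1, w.1 = 0 : link j, with j = t-1
    right
    refine ⟨hes, v, w, rfl, hvv, ?_⟩
    have : (j : ℕ) = t - 1 := by omega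
    rw [this, h2]
    have ht1 : t - 1 + 1 = t := by omega
    rw [ht1, Nat.mod_self]
  · -- r w v, same column: w is the hub, contradiction
    exfalso
    apply hw
    have : w = (w.1, w.2) := rfl
    rw [this, h1', h2', hv1]
  · -- v.1 = w.1 + 1 : edge in link i
    left
    refine ⟨hes, w, v, Sym2.eq_swap, ?_, ?_⟩
    · rcases Nat.lt_or_ge ((i : ℕ) + 1) t with h | h
      · rw [Nat.mod_eq_of_lt h] at hj; omega
      · have h' : (i : ℕ) + 1 = t := by omega
        rw [h', Nat.mod_self] at hj; omega
    · rw [← hj]; exact hvv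
  · -- w.1 = t-1, v.1 = 0 : link i with i = t-1, j = 0
    left
    have hj0 : (j : ℕ) = 0 := by omega
    have h' : (i : ℕ) + 1 = t := by
      rcases Nat.lt_or_ge ((i : ℕ) + 1) t with h | h
      · rw [Nat.mod_eq_of_lt h] at hj; omega
      · omega
    refine ⟨hes, w, v, Sym2.eq_swap, by omega, ?_⟩
    rw [h', Nat.mod_self]; omega

end FlowerAux

open FlowerAux

/-- Every perfect matching of the Flower snark `J(t)`, `t ≥ 5` odd, contains exactly
one edge from each link. -/
theorem flowerSnark_perfectMatching_one_edge_per_link (t : ℕ) (ht : 5 ≤ t)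
    (htodd : Odd t) (M : (flowerSnark t).Subgraph) (hM : M.IsPerfectMatching) :
    ∀ i : Fin t, ∃! e, e ∈ flowerLink t i ∧ e ∈ M.edgeSet := by
  classical
  haveI : NeZero t := ⟨by omega⟩
  -- partner function
  have hex : ∀ v, ∃! w, M.Adj v w := fun v => hM.1 (hM.2 v)
  set p : Fin t × Fin 4 → Fin t × Fin 4 := fun v => (hex v).choose with hp_def
  have hp : ∀ v, M.Adj v (p v) := fun v => (hex v).choose_spec.1
  have hpu : ∀ v w, M.Adj v w → w = p v := fun v w h => ((hex v).choose_spec.2 w h)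
  have hpp : ∀ v, p (p v) = v := fun v => (hpu (p v) v (hp v).symm).symm
  set x : Fin t → ℕ := fun i => (flowerLink t i ∩ M.edgeSet).ncard with hx_def
  -- key: x i + x (i+1) = 2
  have key : ∀ i : Fin t, x i + x (i + 1) = 2 := by
    intro i
    set j : Fin t := i + 1 with hj_def
    have hj : (j : ℕ) = ((i : ℕ) + 1) % t := by
      rw [hj_def, Fin.add_def, Fin.val_one', Nat.mod_eq_of_lt (show (1:ℕ) < t by omega)]
    have hij : (i : ℕ) ≠ (j : ℕ) := by
      rw [hj]; exact fun h => n1 (by omega) i.isLt h.symm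
    -- the set of non-hub vertices of column j not matched to the hub
    set A : Set (Fin t × Fin 4) := {v | v.1 = j ∧ v.2 ≠ 0 ∧ p v ≠ (j, 0)} with hA_def
    have hhub : (p (j, 0)).1 = j ∧ (p (j, 0)).2 ≠ 0 := hubNb (M.adj_sub (hp (j, 0)))
    have hAeq : A = ({(j, 1), (j, 2), (j, 3)} : Set (Fin t × Fin 4)) \ {p (j, 0)} := by
      ext v
      simp only [hA_def, Set.mem_setOf_eq, Set.mem_diff, Set.mem_insert_iff,
        Set.mem_singleton_iff]
      constructor
      · rintro ⟨h1, h2, h3⟩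
        constructor
        · have hv : v = (v.1, v.2) := rfl
          rcases fin4cases v.2 with h | h | h | h
          · exact absurd h h2
          · left; rw [hv, h1, h]
          · right; left; rw [hv, h1, h]
          · right; right; rw [hv, h1, h]
        · intro hve
          apply h3
          rw [hve, hpp]
      · rintro ⟨h1, h2⟩
        have hv1 : v.1 = j ∧ v.2 ≠ 0 := by
          rcases h1 with h | h | h <;> rw [h] <;> exact ⟨rfl, by simp⟩
        refine ⟨hv1.1, hv1.2, fun h => ?_⟩
        apply h2
        rw [← hpp v, h]
    have hhubmem : p (j, 0) ∈ ({(j, 1), (j, 2), (j, 3)} : Set (Fin t × Fin 4)) := by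
      have hv : p (j, 0) = ((p (j, 0)).1, (p (j, 0)).2) := rfl
      simp only [Set.mem_insert_iff, Set.mem_singleton_iff]
      rcases fin4cases (p (j, 0)).2 with h | h | h | h
      · exact absurd h hhub.2
      · left; rw [hv, hhub.1, h]
      · right; left; rw [hv, hhub.1, h]
      · right; right; rw [hv, hhub.1, h]
    have htriple : ({(j, 1), (j, 2), (j, 3)} : Set (Fin t × Fin 4)).ncard = 3 := by
      rw [Set.ncard_insert_of_notMem (by simp), Set.ncard_insert_of_notMem (by simp),
        Set.ncard_singleton]
    have hAcard : A.ncard = 2 := by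
      rw [hAeq, Set.ncard_diff_singleton_of_mem hhubmem, htriple]
    -- the map from A to matching edges
    set φ : Fin t × Fin 4 → Sym2 (Fin t × Fin 4) := fun v => s(v, p v) with hφ_def
    have hinj : Set.InjOn φ A := by
      intro v hv v' hv' heq
      simp only [hφ_def, Sym2.eq_iff] at heq
      rcases heq with ⟨h1, _⟩ | ⟨h1, h2⟩
      · exact h1
      · exfalso
        have hadj : M.Adj v' v := by rw [h1]; exact hp v'
        have : v'.2 = 0 ∨ v.2 = 0 :=
          sameCol ht (M.adj_sub hadj) (hv'.1.trans hv.1.symm)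
        rcases this with h | h
        · exact hv'.2.1 h
        · exact hv.2.1 h
    have himg : φ '' A = (flowerLink t i ∩ M.edgeSet) ∪ (flowerLink t j ∩ M.edgeSet) := by
      ext e
      constructor
      · rintro ⟨v, ⟨hv1, hv2, hv3⟩, rfl⟩
        have hme : φ v ∈ M.edgeSet := SimpleGraph.Subgraph.mem_edgeSet.mpr (hp v)
        have : s(v, p v) ∈ flowerLink t i ∨ s(v, p v) ∈ flowerLink t j :=
          locate ht hj hv1 hv2 hv3 (M.adj_sub (hp v))
        rcases this with h | h
        · exact Or.inl ⟨h, hme⟩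
        · exact Or.inr ⟨h, hme⟩
      · rintro (⟨hL, hMe⟩ | ⟨hL, hMe⟩)
        · obtain ⟨a, b, hab, ha, hb, ha2, hb2, -⟩ := linkMem ht hL
          rw [hab] at hMe
          have hadj : M.Adj a b := SimpleGraph.Subgraph.mem_edgeSet.mp hMe
          have hpb : p b = a := (hpu b a hadj.symm).symm
          refine ⟨b, ⟨Fin.val_injective (by rw [hb, ← hj]), hb2, ?_⟩, ?_⟩
          · rw [hpb]
            intro h
            apply hij
            rw [← ha, h, hj]
          · simp only [hφ_def, hpb, hab]
            exact Sym2.eq_swap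
        · obtain ⟨a, b, hab, ha, hb, ha2, hb2, -⟩ := linkMem ht hL
          rw [hab] at hMe
          have hadj : M.Adj a b := SimpleGraph.Subgraph.mem_edgeSet.mp hMe
          have hpa : p a = b := (hpu a b hadj).symm
          refine ⟨a, ⟨Fin.val_injective ha, ha2, ?_⟩, ?_⟩
          · rw [hpa]
            intro h
            have : (b.1 : ℕ) = (j : ℕ) := by rw [h]
            rw [hb] at this
            exact n1 (by omega) j.isLt this
          · simp only [hφ_def, hpa, hab]
    have hdisj : Disjoint (flowerLink t i ∩ M.edgeSet) (flowerLink t j ∩ M.edgeSet) := by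
      rw [Set.disjoint_left]
      rintro e ⟨hi', -⟩ ⟨hj', -⟩
      obtain ⟨a, b, hab, ha, hb, -, -, -⟩ := linkMem ht hi'
      obtain ⟨a', b', hab', ha', hb', -, -, -⟩ := linkMem ht hj'
      rw [hab] at hab'
      rw [Sym2.eq_iff] at hab'
      rcases hab' with ⟨h1, -⟩ | ⟨h1, h2⟩
      · apply hij
        rw [← ha, h1, ha']
      · have hia : (a.1 : ℕ) = ((j : ℕ) + 1) % t := by rw [h1, hb']
        rw [ha, hj] at hia
        exact n2 (by omega) i.isLt hia.symm
    have hcard : x i + x j = 2 := by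
      have h1 : (φ '' A).ncard = 2 := by rw [Set.ncard_image_of_injOn hinj, hAcard]
      rw [himg, Set.ncard_union_eq hdisj (Set.toFinite _) (Set.toFinite _)] at h1
      exact h1
    exact hcard
  -- x i ≤ 2
  have hle : ∀ i : Fin t, x i ≤ 2 := fun i => by have := key i; omega
  -- alternation
  open Fin.NatCast in
  have claim : ∀ k : ℕ, ∀ i : Fin t,
      x (i + (k : Fin t)) = if Even k then x i else 2 - x i := by
    intro k
    induction k with
    | zero => intro i; simp
    | succ k ih =>
      intro i
      have hcast : ((k + 1 : ℕ) : Fin t) = (k : Fin t) + 1 := by push_cast; ring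
      have hstep : x (i + (k : Fin t) + 1) = 2 - x (i + (k : Fin t)) := by
        have := key (i + (k : Fin t)); omega
      rw [hcast, ← add_assoc, hstep, ih i]
      rcases Nat.even_or_odd k with h | h
      · rw [if_pos h, if_neg (by rw [Nat.even_add_one]; exact not_not_intro h)]
      · have hne : ¬Even k := Nat.not_even_iff_odd.mpr h
        rw [if_neg hne, if_pos (by rw [Nat.even_add_one]; exact hne)]
        have := hle i
        omega
  have hone : ∀ i : Fin t, x i = 1 := by
    intro i
    have h1 := claim t i
    rw [Fin.natCast_self, add_zero, if_neg (by simpa using htodd)] at h1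
    have := hle i
    omega
  intro i
  obtain ⟨e, he⟩ := Set.ncard_eq_one.mp (hone i)
  refine ⟨e, ?_, ?_⟩
  · have : e ∈ flowerLink t i ∩ M.edgeSet := by rw [he]; exact rfl
    exact this
  · intro y hy
    have : y ∈ flowerLink t i ∩ M.edgeSet := hy
    rw [he] at this
    exact this
end

section
/- Let t ≥ 5 be odd. Every 2-factor of the Flower snark J(t) consists of exactly two cycles, both of odd length; that is, J(t) is odd 2-factored. -/
open SimpleGraph

namespace FSProof

/-- the twist map on rows -/
def twist (j : Fin 4) : Fin 4 := if j = 1 then 2 else if j = 2 then 1 else j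

lemma twist_twist (j : Fin 4) : twist (twist j) = j := by revert j; decide

lemma twist_ne0 {j : Fin 4} (h : j ≠ 0) : twist j ≠ 0 := by revert h; revert j; decide

lemma twist_swap (j : Fin 4) : Equiv.swap (1 : Fin 4) 2 j = twist j := by revert j; decide

/-- the third row distinct from `a` and `m` -/
def other (a m : Fin 4) : Fin 4 :=
  if 1 ≠ a ∧ 1 ≠ m then 1 else if 2 ≠ a ∧ 2 ≠ m then 2 else 3

lemma other_spec : ∀ a m j : Fin 4, a ≠ 0 → m ≠ 0 → a ≠ m →
    j ≠ 0 → j ≠ a → j ≠ m → j = other a m := by decide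

lemma other_ne : ∀ a m : Fin 4, a ≠ 0 → m ≠ 0 → a ≠ m →
    other a m ≠ 0 ∧ other a m ≠ a ∧ other a m ≠ m := by decide

lemma perm4_eq_one : ∀ (σ : Equiv.Perm (Fin 4)) (b : Fin 4), Equiv.Perm.sign σ = 1 →
    σ 0 = 0 → b ≠ 0 → σ b = b → σ = 1 := by decide

open scoped Classical in
/-- indicator of a proposition -/
noncomputable def ind (p : Prop) : ℕ := if p then 1 else 0

lemma ind_pos {p : Prop} (h : p) : ind p = 1 := by simp [ind, h]
lemma ind_neg {p : Prop} (h : ¬ p) : ind p = 0 := by simp [ind, h]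
lemma ind_le (p : Prop) : ind p ≤ 1 := by by_cases h : p <;> simp [ind, h]
lemma ind_congr {p q : Prop} (h : p ↔ q) : ind p = ind q := by
  by_cases hp : p
  · rw [ind_pos hp, ind_pos (h.mp hp)]
  · rw [ind_neg hp, ind_neg (fun hq => hp (h.mpr hq))]
lemma ind_eq_one {p : Prop} (h : ind p = 1) : p := by
  by_cases hp : p; · exact hp
  · rw [ind_neg hp] at h; omega
lemma ind_eq_zero {p : Prop} (h : ind p = 0) : ¬ p := by
  intro hp; rw [ind_pos hp] at h; omega

/-- row twisting at boundary `k` (the twist happens at boundary `t-1`) -/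
def tw (t k : ℕ) (j : Fin 4) : Fin 4 := if k % t = t - 1 then twist j else j

lemma tw_period (t k : ℕ) : tw t (k + t) = tw t k := by
  funext j; simp [tw, Nat.add_mod_right]

lemma tw_mod (t k : ℕ) : tw t (k % t) = tw t k := by
  funext j; simp [tw, Nat.mod_mod_of_dvd]

lemma tw_tw (t k : ℕ) (j : Fin 4) : tw t k (tw t k j) = j := by
  unfold tw; split <;> simp [twist_twist]

lemma tw_ne0 {t k : ℕ} {j : Fin 4} (h : j ≠ 0) : tw t k j ≠ 0 := by
  unfold tw; split
  · exact twist_ne0 h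
  · exact h

lemma tw_zero (t k : ℕ) : tw t k 0 = 0 := by
  unfold tw; split <;> rfl

lemma tw_inj {t k : ℕ} {i j : Fin 4} (h : tw t k i = tw t k j) : i = j := by
  have := congrArg (tw t k) h
  rwa [tw_tw, tw_tw] at this

lemma periodic_mod {t : ℕ} (ht : 0 < t) {P : ℕ → Prop} (hP : ∀ n, P (n + t) ↔ P n) :
    ∀ k, P k ↔ P (k % t) := by
  intro k
  induction k using Nat.strong_induction_on with
  | _ k ih =>
    by_cases h : k < t
    · rw [Nat.mod_eq_of_lt h]
    · push_neg at h
      have h1 : k - t + t = k := by omega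
      have h2 : k % t = (k - t) % t := Nat.mod_eq_sub_mod h
      have h3 := hP (k - t)
      rw [h1] at h3
      rw [h2, h3]
      exact ih (k - t) (by omega)

section Main

variable {t : ℕ} (ht : 5 ≤ t) (htodd : Odd t) (F : SimpleGraph (Fin t × Fin 4))

/-- column index as `Fin t` -/
def fn (n : ℕ) : Fin t := ⟨n % t, Nat.mod_lt _ (by omega)⟩

lemma fn_period (n : ℕ) : fn ht (n + t) = fn ht n := by
  simp [fn, Nat.add_mod_right]

lemma fn_small {n : ℕ} (h : n < t) : (fn ht n : ℕ) = n := Nat.mod_eq_of_lt h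

/-- vertex in column `k` row `j` -/
def vx (k : ℕ) (j : Fin 4) : Fin t × Fin 4 := (fn ht k, j)

lemma vx_period (k : ℕ) (j : Fin 4) : vx ht (k + t) j = vx ht k j := by
  simp [vx, fn_period]

/-- the link edge at boundary `k`, row `j` (left frame) is in `F` -/
def LL (k : ℕ) (j : Fin 4) : Prop := F.Adj (vx ht k j) (vx ht (k + 1) (tw t k j))

/-- the spoke at column `k`, row `j` is in `F` -/
def SS (k : ℕ) (j : Fin 4) : Prop := F.Adj (vx ht k 0) (vx ht k j)

lemma LL_period (k : ℕ) (j : Fin 4) : LL ht F (k + t) j ↔ LL ht F k j := by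
  unfold LL
  rw [show k + t + 1 = k + 1 + t by ring, vx_period, vx_period, tw_period]

lemma SS_period (k : ℕ) (j : Fin 4) : SS ht F (k + t) j ↔ SS ht F k j := by
  unfold SS; rw [vx_period, vx_period]

lemma LL_mod (k : ℕ) (j : Fin 4) : LL ht F k j ↔ LL ht F (k % t) j :=
  periodic_mod (t := t) (by omega) (P := fun n => LL ht F n j) (fun n => LL_period ht F n j) k

lemma SS_mod (k : ℕ) (j : Fin 4) : SS ht F k j ↔ SS ht F (k % t) j :=
  periodic_mod (t := t) (by omega) (P := fun n => SS ht F n j) (fun n => SS_period ht F n j) k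

variable (hle : F ≤ flowerSnark t) (hdeg : ∀ v, (F.neighborSet v).ncard = 2)

include hle hdeg

lemma ncard_three {v n1 n2 n3 : Fin t × Fin 4} (h12 : n1 ≠ n2) (h13 : n1 ≠ n3) (h23 : n2 ≠ n3)
    (hsub : ∀ w, F.Adj v w → w = n1 ∨ w = n2 ∨ w = n3)
    (hcard : (F.neighborSet v).ncard = 2) :
    ind (F.Adj v n1) + ind (F.Adj v n2) + ind (F.Adj v n3) = 2 := by
  classical
  have hset : F.neighborSet v = ↑(({n1, n2, n3} : Finset _).filter (fun w => F.Adj v w)) := by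
    ext w
    simp only [mem_neighborSet, Finset.coe_filter, Finset.mem_insert, Finset.mem_singleton,
      Set.mem_setOf_eq]
    exact ⟨fun h => ⟨hsub w h, h⟩, fun h => h.2⟩
  rw [hset, Set.ncard_coe_finset, Finset.card_filter] at hcard
  rw [Finset.sum_insert (by simp [h12, h13]), Finset.sum_insert (by simp [h23]),
    Finset.sum_singleton] at hcard
  by_cases h1 : F.Adj v n1 <;> by_cases h2 : F.Adj v n2 <;> by_cases h3 : F.Adj v n3 <;>
    simp [h1, h2, h3, ind] at hcard ⊢ <;> omega

lemma hub_nbr {i : Fin t} {w : Fin t × Fin 4} (hadj : F.Adj (i, 0) w) :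
    ∃ j : Fin 4, j ≠ 0 ∧ w = (i, j) := by
  obtain ⟨w1, w2⟩ := w
  have h := hle hadj
  rw [flowerSnark, fromRel_adj] at h
  obtain ⟨hne, h | h⟩ := h <;>
    rcases h with ⟨h1, h2, h3⟩ | ⟨h1, h2, h3⟩ | ⟨h1, h2, h3⟩
  · exact ⟨w2, h3, by simp at h1; rw [h1]⟩
  · simp at h3
  · rcases h3 with ⟨h3, _⟩ | ⟨h3, _⟩ | ⟨h3, _⟩ <;> simp at h3
  · simp at h3
  · simp at h2 h3; exact absurd h2 h3
  · rcases h3 with ⟨_, h3⟩ | ⟨_, h3⟩ | ⟨_, h3⟩ <;> simp at h3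

lemma row_nbr {k : ℕ} (hk : k < t) {j : Fin 4} (hj : j ≠ 0) {w : Fin t × Fin 4}
    (hadj : F.Adj (vx ht k j) w) :
    w = vx ht k 0 ∨ w = vx ht (k + 1) (tw t k j) ∨ w = vx ht (k + t - 1) (tw t (k + t - 1) j) := by
  obtain ⟨w1, w2⟩ := w
  have h := hle hadj
  rw [flowerSnark, fromRel_adj] at h
  have hfk : ((fn ht k : Fin t) : ℕ) = k := fn_small ht hk
  obtain ⟨hne, h | h⟩ := h <;>
    rcases h with ⟨h1, h2, h3⟩ | ⟨h1, h2, h3⟩ | ⟨h1, h2, h3⟩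
  · exact absurd h2 hj
  · -- straight link to the right: w = (k+1, j), k+1 < t
    right; left
    simp only [vx] at h1 h2 ⊢
    rw [hfk] at h1
    have hk1 : k + 1 < t := by have := w1.isLt; omega
    have htw : tw t k j = j := by
      unfold tw; rw [Nat.mod_eq_of_lt hk]
      have hne' : ¬ (k = t - 1) := by omega
      simp [hne']
    rw [htw]
    have hv : fn ht (k+1) = w1 := Fin.ext (by rw [fn_small ht hk1, h1])
    rw [hv, ← h2]
  · -- twisted link to the right: k = t-1
    right; left
    simp only [vx] at h1 h2 h3 ⊢
    rw [hfk] at h1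
    have hv : fn ht (k+1) = w1 := by
      apply Fin.ext
      show (k+1) % t = _
      rw [h1, h2]
      simp [Nat.sub_add_cancel (by omega : 1 ≤ t)]
    have htw : tw t k j = w2 := by
      unfold tw
      rw [Nat.mod_eq_of_lt hk, if_pos h1]
      rcases h3 with ⟨ha, hb⟩ | ⟨ha, hb⟩ | ⟨ha, hb⟩ <;> rw [ha, hb] <;> rfl
    rw [hv, htw]
  · -- spoke
    left
    simp only [vx] at h1 h2 h3 ⊢
    rw [← h1, ← h2]
  · -- straight link to the left: k = w1 + 1
    right; right
    simp only [vx] at h1 h2 h3 ⊢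
    rw [hfk] at h1
    have hw1 : (w1 : ℕ) < t := w1.isLt
    have hmod : (k + t - 1) % t = k - 1 := by
      have he : k + t - 1 = (k - 1) + t := by omega
      rw [he, Nat.add_mod_right, Nat.mod_eq_of_lt (by omega)]
    have htw : tw t (k + t - 1) j = j := by
      unfold tw; rw [hmod]
      have hne' : ¬ (k - 1 = t - 1) := by omega
      simp [hne']
    have hv : fn ht (k + t - 1) = w1 := by
      apply Fin.ext
      show (k + t - 1) % t = _
      rw [hmod]; omega
    rw [htw, hv, h2]
  · -- twisted link to the left: k = 0, w1 = t-1
    right; right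
    simp only [vx] at h1 h2 h3 ⊢
    rw [hfk] at h2
    have hmod : (k + t - 1) % t = t - 1 := by
      have he : k + t - 1 = t - 1 := by omega
      rw [he, Nat.mod_eq_of_lt (by omega)]
    have hv : fn ht (k + t - 1) = w1 := by
      apply Fin.ext
      show (k + t - 1) % t = _
      rw [hmod, h1]
    have htw : tw t (k + t - 1) j = w2 := by
      unfold tw
      rw [hmod, if_pos rfl]
      rcases h3 with ⟨ha, hb⟩ | ⟨ha, hb⟩ | ⟨ha, hb⟩ <;> rw [hb, ha] <;> rfl
    rw [hv, htw]

omit hle hdeg in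
lemma fn_ne {a b : ℕ} (h : a % t ≠ b % t) : fn ht a ≠ fn ht b :=
  fun he => h (congrArg Fin.val he)

lemma hub_sum (k : ℕ) :
    ind (SS ht F k 1) + ind (SS ht F k 2) + ind (SS ht F k 3) = 2 := by
  have hsub : ∀ w, F.Adj (vx ht k 0) w →
      w = vx ht k 1 ∨ w = vx ht k 2 ∨ w = vx ht k 3 := by
    intro w hw
    obtain ⟨j, hj, rfl⟩ := hub_nbr F hle hdeg (i := fn ht k) hw
    have hall : ∀ jj : Fin 4, jj ≠ 0 → jj = 1 ∨ jj = 2 ∨ jj = 3 := by decide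
    have h4 := hall j hj
    rcases h4 with rfl | rfl | rfl
    · exact Or.inl rfl
    · exact Or.inr (Or.inl rfl)
    · exact Or.inr (Or.inr rfl)
  exact ncard_three F hle hdeg (by simp [vx]) (by simp [vx]) (by simp [vx]) hsub (hdeg _)

omit F hle hdeg in
lemma mod_succ {k : ℕ} (hk : k < t) :
    (k + 1) % t = k + 1 ∧ k + 1 < t ∨ (k + 1) % t = 0 ∧ k = t - 1 := by
  rcases Nat.lt_or_ge (k + 1) t with h | h
  · exact Or.inl ⟨Nat.mod_eq_of_lt h, h⟩
  · have he : k + 1 = t := by omega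
    exact Or.inr ⟨by rw [he, Nat.mod_self], by omega⟩

omit F hle hdeg in
lemma mod_pred {k : ℕ} (hk : k < t) :
    (k + t - 1) % t = k - 1 ∧ 1 ≤ k ∨ (k + t - 1) % t = t - 1 ∧ k = 0 := by
  rcases Nat.eq_zero_or_pos k with h | h
  · subst h
    refine Or.inr ⟨?_, rfl⟩
    rw [show 0 + t - 1 = t - 1 by omega]
    exact Nat.mod_eq_of_lt (by omega)
  · left
    have he : k + t - 1 = (k - 1) + t := by omega
    rw [he, Nat.add_mod_right, Nat.mod_eq_of_lt (by omega)]
    exact ⟨rfl, h⟩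

lemma row_sum_lt {k : ℕ} (hk : k < t) {j : Fin 4} (hj : j ≠ 0) :
    ind (SS ht F k j) + ind (LL ht F (k + t - 1) (tw t (k + t - 1) j)) + ind (LL ht F k j) = 2 := by
  have m0 : k % t = k := Nat.mod_eq_of_lt hk
  have d12 : vx ht k 0 ≠ vx ht (k + 1) (tw t k j) := by
    intro he
    have h := congrArg (fun p => ((p.1 : Fin t) : ℕ)) he
    simp only [vx, fn] at h
    rcases mod_succ hk with ⟨h', h''⟩ | ⟨h', h''⟩ <;> omega
  have d13 : vx ht k 0 ≠ vx ht (k + t - 1) (tw t (k + t - 1) j) := by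
    intro he
    have h := congrArg (fun p => ((p.1 : Fin t) : ℕ)) he
    simp only [vx, fn] at h
    rcases mod_pred hk with ⟨h', h''⟩ | ⟨h', h''⟩ <;> omega
  have d23 : vx ht (k + 1) (tw t k j) ≠ vx ht (k + t - 1) (tw t (k + t - 1) j) := by
    intro he
    have h := congrArg (fun p => ((p.1 : Fin t) : ℕ)) he
    simp only [vx, fn] at h
    rcases mod_succ hk with ⟨h', h''⟩ | ⟨h', h''⟩ <;>
      rcases mod_pred hk with ⟨g', g''⟩ | ⟨g', g''⟩ <;> omega
  have hsub : ∀ w, F.Adj (vx ht k j) w → w = vx ht k 0 ∨ w = vx ht (k + 1) (tw t k j) ∨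
      w = vx ht (k + t - 1) (tw t (k + t - 1) j) := fun w hw => row_nbr ht F hle hdeg hk hj hw
  have key := ncard_three F hle hdeg d12 d13 d23 hsub (hdeg _)
  have e1 : F.Adj (vx ht k j) (vx ht k 0) ↔ SS ht F k j := adj_comm F _ _
  have e3 : F.Adj (vx ht k j) (vx ht (k + t - 1) (tw t (k + t - 1) j)) ↔
      LL ht F (k + t - 1) (tw t (k + t - 1) j) := by
    unfold LL
    rw [show (k + t - 1) + 1 = k + t by omega, tw_tw, vx_period]
    exact adj_comm F _ _
  have e2 : F.Adj (vx ht k j) (vx ht (k + 1) (tw t k j)) ↔ LL ht F k j := Iff.rfl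
  rw [ind_congr e1, ind_congr e2, ind_congr e3] at key
  omega

/-- number of link edges of `F` at boundary `k` -/
noncomputable def Bs (k : ℕ) : ℕ :=
  ind (LL ht F k 1) + ind (LL ht F k 2) + ind (LL ht F k 3)

omit hle hdeg in
lemma Bs_period (k : ℕ) : Bs ht F (k + t) = Bs ht F k := by
  unfold Bs
  rw [ind_congr (LL_period ht F k 1), ind_congr (LL_period ht F k 2),
    ind_congr (LL_period ht F k 3)]

omit hle hdeg in
lemma Bs_mod (k : ℕ) : Bs ht F k = Bs ht F (k % t) := by
  unfold Bs
  rw [ind_congr (LL_mod ht F k 1), ind_congr (LL_mod ht F k 2),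
    ind_congr (LL_mod ht F k 3)]

lemma col_eq {k : ℕ} (hk : k < t) : Bs ht F (k + t - 1) + Bs ht F k = 4 := by
  have r1 := row_sum_lt ht F hle hdeg hk (j := 1) (by decide)
  have r2 := row_sum_lt ht F hle hdeg hk (j := 2) (by decide)
  have r3 := row_sum_lt ht F hle hdeg hk (j := 3) (by decide)
  have hs := hub_sum ht F hle hdeg k
  have hleft : ind (LL ht F (k + t - 1) (tw t (k + t - 1) 1)) +
      ind (LL ht F (k + t - 1) (tw t (k + t - 1) 2)) +
      ind (LL ht F (k + t - 1) (tw t (k + t - 1) 3)) = Bs ht F (k + t - 1) := by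
    unfold Bs tw
    split
    · show ind (LL ht F _ 2) + ind (LL ht F _ 1) + ind (LL ht F _ 3) = _
      omega
    · rfl
  unfold Bs at *
  omega

lemma Bs_rec (k : ℕ) : Bs ht F k + Bs ht F (k + 1) = 4 := by
  set k' := (k + 1) % t with hk'
  have hklt : k' < t := Nat.mod_lt _ (by omega)
  have h := col_eq ht F hle hdeg hklt
  have e1 : Bs ht F (k' + t - 1) = Bs ht F k := by
    rw [Bs_mod ht F (k' + t - 1), Bs_mod ht F k]
    congr 1
    have h1 : k' + t - 1 = k' + (t - 1) := by omega
    rw [h1, hk', Nat.mod_add_mod, show k + 1 + (t - 1) = k + t by omega,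
      Nat.add_mod_right]
  have e2 : Bs ht F k' = Bs ht F (k + 1) := (Bs_mod ht F (k + 1)).symm
  rw [e1, e2] at h
  exact h

include htodd

lemma Bs_two (k : ℕ) : Bs ht F k = 2 := by
  obtain ⟨w, hw⟩ := htodd
  have h2 : ∀ n, Bs ht F (n + 2) = Bs ht F n := by
    intro n
    have a1 := Bs_rec ht F hle hdeg n
    have a2 := Bs_rec ht F hle hdeg (n + 1)
    have e : n + 1 + 1 = n + 2 := by omega
    rw [e] at a2
    omega
  have heven : ∀ s n, Bs ht F (n + 2 * s) = Bs ht F n := by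
    intro s
    induction s with
    | zero => intro n; rfl
    | succ r ih =>
      intro n
      have e : n + 2 * (r + 1) = (n + 2 * r) + 2 := by omega
      rw [e, h2, ih]
  have hstep : Bs ht F (k + 1) = Bs ht F k := by
    have e0 : Bs ht F (k + 1 + t) = Bs ht F (k + 1) := Bs_period ht F (k + 1)
    have e1 : k + 1 + t = k + 2 * (w + 1) := by omega
    rw [e1, heven (w + 1) k] at e0
    exact e0.symm
  have := Bs_rec ht F hle hdeg k
  omega

lemma LL_zero (k : ℕ) : ¬ LL ht F k 0 := by
  intro hL
  unfold LL at hL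
  rw [tw_zero] at hL
  obtain ⟨j, hj, he⟩ := hub_nbr F hle hdeg (i := fn ht k) hL
  exact hj (congrArg Prod.snd he).symm

lemma exists_m (k : ℕ) : ∃ mk : Fin 4, mk ≠ 0 ∧ ¬ LL ht F k mk ∧
    ∀ j, j ≠ 0 → j ≠ mk → LL ht F k j := by
  have hb := Bs_two ht htodd F hle hdeg k
  unfold Bs at hb
  by_cases h1 : LL ht F k 1 <;> by_cases h2 : LL ht F k 2 <;> by_cases h3 : LL ht F k 3
  · exfalso; rw [ind_pos h1, ind_pos h2, ind_pos h3] at hb; omega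
  · refine ⟨3, by decide, h3, ?_⟩
    intro j hj0 hjm; fin_cases j <;> simp_all
  · refine ⟨2, by decide, h2, ?_⟩
    intro j hj0 hjm; fin_cases j <;> simp_all
  · exfalso; rw [ind_pos h1, ind_neg h2, ind_neg h3] at hb; omega
  · refine ⟨1, by decide, h1, ?_⟩
    intro j hj0 hjm; fin_cases j <;> simp_all
  · exfalso; rw [ind_neg h1, ind_pos h2, ind_neg h3] at hb; omega
  · exfalso; rw [ind_neg h1, ind_neg h2, ind_pos h3] at hb; omega
  · exfalso; rw [ind_neg h1, ind_neg h2, ind_neg h3] at hb; omega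

/-- the missing row at boundary `k` -/
noncomputable def mm (k : ℕ) : Fin 4 :=
  Classical.choose (exists_m ht htodd F hle hdeg (k % t))

lemma mm_ne0 (k : ℕ) : mm ht htodd F hle hdeg k ≠ 0 :=
  (Classical.choose_spec (exists_m ht htodd F hle hdeg (k % t))).1

lemma LL_iff (k : ℕ) (j : Fin 4) :
    LL ht F k j ↔ (j ≠ 0 ∧ j ≠ mm ht htodd F hle hdeg k) := by
  have hs := Classical.choose_spec (exists_m ht htodd F hle hdeg (k % t))
  rw [LL_mod]
  constructor
  · intro h
    refine ⟨?_, ?_⟩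
    · intro h0; subst h0; exact LL_zero ht htodd F hle hdeg (k % t) h
    · intro hm; rw [hm] at h; exact hs.2.1 h
  · rintro ⟨hj0, hjm⟩
    exact hs.2.2 j hj0 hjm

lemma mm_eq {k : ℕ} {x : Fin 4} (hx0 : x ≠ 0) (hxL : ¬ LL ht F k x) :
    x = mm ht htodd F hle hdeg k := by
  by_contra hne
  exact hxL ((LL_iff ht htodd F hle hdeg k x).mpr ⟨hx0, hne⟩)

lemma mm_not_LL (k : ℕ) : ¬ LL ht F k (mm ht htodd F hle hdeg k) :=
  fun h => ((LL_iff ht htodd F hle hdeg k _).mp h).2 rfl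

lemma mm_period (k : ℕ) : mm ht htodd F hle hdeg (k + t) = mm ht htodd F hle hdeg k := by
  apply mm_eq ht htodd F hle hdeg (mm_ne0 ht htodd F hle hdeg (k + t))
  intro h
  exact mm_not_LL ht htodd F hle hdeg (k + t) ((LL_period ht F k _).mpr h)

lemma mm_mod (k : ℕ) : mm ht htodd F hle hdeg (k % t) = mm ht htodd F hle hdeg k := by
  apply mm_eq ht htodd F hle hdeg (mm_ne0 ht htodd F hle hdeg (k % t))
  intro h
  exact mm_not_LL ht htodd F hle hdeg (k % t) ((LL_mod ht F k _).mp h)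

/-- the missing row at the left boundary of column `k`, in column-`k` frame -/
noncomputable def aa (k : ℕ) : Fin 4 :=
  tw t (k + t - 1) (mm ht htodd F hle hdeg (k + t - 1))

lemma aa_ne0 (k : ℕ) : aa ht htodd F hle hdeg k ≠ 0 :=
  tw_ne0 (mm_ne0 ht htodd F hle hdeg _)

omit hle hdeg htodd in
lemma tw_congr {a b : ℕ} (h : a % t = b % t) : tw t a = tw t b := by
  unfold tw; rw [h]

lemma mm_congr {a b : ℕ} (h : a % t = b % t) :
    mm ht htodd F hle hdeg a = mm ht htodd F hle hdeg b := by
  rw [← mm_mod ht htodd F hle hdeg a, ← mm_mod ht htodd F hle hdeg b, h]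

omit hle hdeg htodd in
lemma pred_congr (h1 : 0 < t) (k : ℕ) : (k % t + t - 1) % t = (k + t - 1) % t := by
  rw [show k % t + t - 1 = k % t + (t - 1) by omega, show k + t - 1 = k + (t - 1) by omega,
    Nat.mod_add_mod]

lemma aa_mod (k : ℕ) : aa ht htodd F hle hdeg (k % t) = aa ht htodd F hle hdeg k := by
  unfold aa
  rw [tw_congr (t := t) (pred_congr (t := t) (by omega) k), mm_congr ht htodd F hle hdeg (pred_congr (t := t) (by omega) k)]

lemma aa_period (k : ℕ) : aa ht htodd F hle hdeg (k + t) = aa ht htodd F hle hdeg k := by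
  rw [← aa_mod ht htodd F hle hdeg (k + t), Nat.add_mod_right, aa_mod]

lemma aa_succ (k : ℕ) : aa ht htodd F hle hdeg (k + 1) = tw t k (mm ht htodd F hle hdeg k) := by
  unfold aa
  have he : k + 1 + t - 1 = k + t := by omega
  rw [he, tw_congr (t := t) (Nat.add_mod_right k t), mm_period]

lemma leftL_iff (k : ℕ) (j : Fin 4) :
    LL ht F (k + t - 1) (tw t (k + t - 1) j) ↔ (j ≠ 0 ∧ j ≠ aa ht htodd F hle hdeg k) := by
  rw [LL_iff ht htodd F hle hdeg]
  unfold aa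
  constructor
  · rintro ⟨h0, hm⟩
    refine ⟨fun h => h0 (by rw [h, tw_zero]), fun h => hm ?_⟩
    rw [h, tw_tw]
  · rintro ⟨h0, ha⟩
    refine ⟨tw_ne0 h0, fun h => ha ?_⟩
    rw [← tw_tw t (k + t - 1) j, h]

lemma aa_ne_mm (k : ℕ) : aa ht htodd F hle hdeg k ≠ mm ht htodd F hle hdeg k := by
  suffices h : ∀ k' < t, aa ht htodd F hle hdeg k' ≠ mm ht htodd F hle hdeg k' by
    have := h (k % t) (Nat.mod_lt _ (by omega))
    rwa [aa_mod, mm_mod] at this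
  intro k' hk' heq
  have hr := row_sum_lt ht F hle hdeg hk' (mm_ne0 ht htodd F hle hdeg k')
  rw [ind_neg (mm_not_LL ht htodd F hle hdeg k')] at hr
  have hl : ¬ LL ht F (k' + t - 1) (tw t (k' + t - 1) (mm ht htodd F hle hdeg k')) := by
    rw [leftL_iff ht htodd F hle hdeg]
    rintro ⟨-, hne⟩
    exact hne heq.symm
  rw [ind_neg hl] at hr
  have := ind_le (SS ht F k' (mm ht htodd F hle hdeg k'))
  omega

lemma SS_iff {k : ℕ} (hk : k < t) {j : Fin 4} (hj : j ≠ 0) :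
    SS ht F k j ↔ (j = aa ht htodd F hle hdeg k ∨ j = mm ht htodd F hle hdeg k) := by
  have hr := row_sum_lt ht F hle hdeg hk hj
  by_cases h1 : j = aa ht htodd F hle hdeg k
  · have hl : ¬ LL ht F (k + t - 1) (tw t (k + t - 1) j) := by
      rw [leftL_iff ht htodd F hle hdeg]; rintro ⟨-, hne⟩; exact hne h1
    have hrr : LL ht F k j := by
      rw [LL_iff ht htodd F hle hdeg]
      exact ⟨hj, by rw [h1]; exact aa_ne_mm ht htodd F hle hdeg k⟩
    rw [ind_neg hl, ind_pos hrr] at hr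
    constructor
    · intro _; exact Or.inl h1
    · intro _; exact ind_eq_one (by omega)
  · by_cases h2 : j = mm ht htodd F hle hdeg k
    · have hl : LL ht F (k + t - 1) (tw t (k + t - 1) j) := by
        rw [leftL_iff ht htodd F hle hdeg]; exact ⟨hj, h1⟩
      have hrr : ¬ LL ht F k j := by rw [h2]; exact mm_not_LL ht htodd F hle hdeg k
      rw [ind_pos hl, ind_neg hrr] at hr
      constructor
      · intro _; exact Or.inr h2
      · intro _; exact ind_eq_one (by omega)
    · have hl : LL ht F (k + t - 1) (tw t (k + t - 1) j) := by
        rw [leftL_iff ht htodd F hle hdeg]; exact ⟨hj, h1⟩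
      have hrr : LL ht F k j := by rw [LL_iff ht htodd F hle hdeg]; exact ⟨hj, h2⟩
      rw [ind_pos hl, ind_pos hrr] at hr
      constructor
      · intro hs; rw [ind_pos hs] at hr; omega
      · rintro (h | h) <;> [exact absurd h h1; exact absurd h h2]

/-- the twisting permutation at boundary `k` -/
noncomputable def twPm (k : ℕ) : Equiv.Perm (Fin 4) :=
  if k % t = t - 1 then Equiv.swap 1 2 else 1

omit hle hdeg htodd in
lemma twPm_apply (k : ℕ) (j : Fin 4) : twPm (t := t) k j = tw t k j := by
  unfold twPm tw; split
  · exact twist_swap j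
  · rfl

omit hle hdeg htodd in
lemma twPm_inv (k : ℕ) : (twPm (t := t) k)⁻¹ = twPm (t := t) k := by
  unfold twPm; split
  · exact Equiv.swap_inv 1 2
  · exact inv_one

omit hle hdeg htodd in
lemma twPm_congr {a b : ℕ} (h : a % t = b % t) : twPm (t := t) a = twPm (t := t) b := by
  unfold twPm; rw [h]

/-- the strand transport permutation from boundary `k` to boundary `k+1` -/
noncomputable def stp (k : ℕ) : Equiv.Perm (Fin 4) :=
  Equiv.swap (aa ht htodd F hle hdeg (k + 1)) (mm ht htodd F hle hdeg (k + 1)) * twPm (t := t) k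

lemma stp_period (k : ℕ) : stp ht htodd F hle hdeg (k + t) = stp ht htodd F hle hdeg k := by
  unfold stp
  rw [show k + t + 1 = (k + 1) + t by ring, aa_period, mm_period,
    twPm_congr (t := t) (Nat.add_mod_right k t)]

/-- transport from boundary `0` to boundary `k` -/
noncomputable def TT : ℕ → Equiv.Perm (Fin 4)
  | 0 => 1
  | (k+1) => stp ht htodd F hle hdeg k * TT k

lemma TT_fix0 (k : ℕ) : TT ht htodd F hle hdeg k 0 = 0 := by
  induction k with
  | zero => rfl
  | succ n ih =>
    show (stp ht htodd F hle hdeg n * TT ht htodd F hle hdeg n) 0 = 0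
    rw [Equiv.Perm.mul_apply, ih]
    unfold stp
    rw [Equiv.Perm.mul_apply, twPm_apply, tw_zero]
    exact Equiv.swap_apply_of_ne_of_ne (Ne.symm (aa_ne0 ht htodd F hle hdeg _))
      (Ne.symm (mm_ne0 ht htodd F hle hdeg _))

lemma TT_mm (k : ℕ) :
    TT ht htodd F hle hdeg k (mm ht htodd F hle hdeg 0) = mm ht htodd F hle hdeg k := by
  induction k with
  | zero => rfl
  | succ n ih =>
    show (stp ht htodd F hle hdeg n * TT ht htodd F hle hdeg n) _ = _
    rw [Equiv.Perm.mul_apply, ih]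
    unfold stp
    rw [Equiv.Perm.mul_apply, twPm_apply, ← aa_succ ht htodd F hle hdeg n]
    exact Equiv.swap_apply_left _ _

lemma TT_sign_lt : ∀ k, k ≤ t - 1 → Equiv.Perm.sign (TT ht htodd F hle hdeg k) = (-1) ^ k := by
  intro k
  induction k with
  | zero => intro _; simp [TT]
  | succ n ih =>
    intro hn
    show Equiv.Perm.sign (stp ht htodd F hle hdeg n * TT ht htodd F hle hdeg n) = _
    rw [map_mul, ih (by omega)]
    unfold stp
    rw [map_mul, Equiv.Perm.sign_swap (aa_ne_mm ht htodd F hle hdeg (n + 1))]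
    have htw : twPm (t := t) n = 1 := by
      unfold twPm
      rw [Nat.mod_eq_of_lt (by omega), if_neg (by omega)]
    rw [htw, map_one, pow_succ, mul_one, mul_comm]

lemma TT_loop : TT ht htodd F hle hdeg t = 1 := by
  have hsign : Equiv.Perm.sign (TT ht htodd F hle hdeg t) = 1 := by
    obtain ⟨w, hw⟩ := id htodd
    have he : t = (t - 1) + 1 := by omega
    have h2 : TT ht htodd F hle hdeg t =
        stp ht htodd F hle hdeg (t - 1) * TT ht htodd F hle hdeg (t - 1) :=
      congrArg (TT ht htodd F hle hdeg) he
    rw [h2, map_mul, TT_sign_lt ht htodd F hle hdeg (t-1) le_rfl]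
    unfold stp
    rw [map_mul, Equiv.Perm.sign_swap (aa_ne_mm ht htodd F hle hdeg _)]
    have htw : twPm (t := t) (t - 1) = Equiv.swap 1 2 := by
      unfold twPm
      rw [Nat.mod_eq_of_lt (by omega), if_pos rfl]
    rw [htw, Equiv.Perm.sign_swap (by decide)]
    have heven : Even (t - 1) := ⟨w, by omega⟩
    rw [heven.neg_one_pow, mul_one, neg_one_mul, neg_neg]
  have hmt : TT ht htodd F hle hdeg t (mm ht htodd F hle hdeg 0) = mm ht htodd F hle hdeg 0 := by
    rw [TT_mm]
    have h0 := mm_period ht htodd F hle hdeg 0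
    rw [Nat.zero_add] at h0
    exact h0
  exact perm4_eq_one _ _ hsign (TT_fix0 ht htodd F hle hdeg t)
    (mm_ne0 ht htodd F hle hdeg 0) hmt

lemma TT_period (k : ℕ) : TT ht htodd F hle hdeg (k + t) = TT ht htodd F hle hdeg k := by
  induction k with
  | zero => rw [Nat.zero_add, TT_loop]; rfl
  | succ n ih =>
    have e : n + 1 + t = (n + t) + 1 := by omega
    rw [congrArg (TT ht htodd F hle hdeg) e]
    show stp ht htodd F hle hdeg (n + t) * TT ht htodd F hle hdeg (n + t) = _
    rw [stp_period, ih]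
    rfl

lemma TT_mod (k : ℕ) : TT ht htodd F hle hdeg k = TT ht htodd F hle hdeg (k % t) := by
  induction k using Nat.strong_induction_on with
  | _ k ih =>
    by_cases h : k < t
    · rw [Nat.mod_eq_of_lt h]
    · push_neg at h
      have h1 : k - t + t = k := by omega
      have h2 : k % t = (k - t) % t := Nat.mod_eq_sub_mod h
      have h3 := TT_period ht htodd F hle hdeg (k - t)
      rw [h1] at h3
      rw [h2]
      exact h3.trans (ih (k - t) (by omega))

/-- the strand colouring at boundary `k` -/
noncomputable def cB (k : ℕ) (j : Fin 4) : Bool :=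
  decide ((TT ht htodd F hle hdeg k)⁻¹ j = aa ht htodd F hle hdeg 0)

lemma cB_congr {a b : ℕ} (h : a % t = b % t) :
    cB ht htodd F hle hdeg a = cB ht htodd F hle hdeg b := by
  unfold cB
  rw [TT_mod ht htodd F hle hdeg a, TT_mod ht htodd F hle hdeg b, h]

lemma cB_step (k : ℕ) (j : Fin 4) : cB ht htodd F hle hdeg (k + 1) j =
    cB ht htodd F hle hdeg k ((stp ht htodd F hle hdeg k)⁻¹ j) := by
  have h : (TT ht htodd F hle hdeg (k + 1))⁻¹ j =
      (TT ht htodd F hle hdeg k)⁻¹ ((stp ht htodd F hle hdeg k)⁻¹ j) := by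
    show ((stp ht htodd F hle hdeg k * TT ht htodd F hle hdeg k)⁻¹) j = _
    rw [mul_inv_rev, Equiv.Perm.mul_apply]
  exact congrArg (fun z => decide (z = aa ht htodd F hle hdeg 0)) h

lemma stp_inv_apply (k : ℕ) (j : Fin 4) : (stp ht htodd F hle hdeg k)⁻¹ j =
    tw t k (Equiv.swap (aa ht htodd F hle hdeg (k+1)) (mm ht htodd F hle hdeg (k+1)) j) := by
  unfold stp
  rw [mul_inv_rev, Equiv.Perm.mul_apply, twPm_inv, Equiv.swap_inv, twPm_apply]

/-- the colour of the hub strand in column `k` -/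
noncomputable def hubcol (k : ℕ) : Bool :=
  cB ht htodd F hle hdeg (k + t - 1) (tw t (k + t - 1) (mm ht htodd F hle hdeg k))

lemma hubcol_congr {a b : ℕ} (h : a % t = b % t) :
    hubcol ht htodd F hle hdeg a = hubcol ht htodd F hle hdeg b := by
  unfold hubcol
  have hp : (a + t - 1) % t = (b + t - 1) % t := by
    rw [← pred_congr (t := t) (by omega) a, ← pred_congr (t := t) (by omega) b, h]
  rw [cB_congr ht htodd F hle hdeg hp, tw_congr (t := t) hp, mm_congr ht htodd F hle hdeg h]

lemma cB_aa (k : ℕ) : cB ht htodd F hle hdeg k (aa ht htodd F hle hdeg k) =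
    hubcol ht htodd F hle hdeg k := by
  have e1 : k + t - 1 + 1 = k + t := by omega
  have h := cB_step ht htodd F hle hdeg (k + t - 1) (aa ht htodd F hle hdeg (k + t))
  rw [congrArg (fun z => cB ht htodd F hle hdeg z (aa ht htodd F hle hdeg (k+t))) e1] at h
  rw [cB_congr ht htodd F hle hdeg (Nat.add_mod_right k t), aa_period] at h
  rw [h, stp_inv_apply]
  simp only [e1]
  rw [aa_period, Equiv.swap_apply_left, mm_period]
  rfl

/-- the two-colouring of the vertices -/
noncomputable def colv (v : Fin t × Fin 4) : Bool :=
  if v.2 = 0 ∨ v.2 = mm ht htodd F hle hdeg (v.1 : ℕ) then hubcol ht htodd F hle hdeg (v.1 : ℕ)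
  else cB ht htodd F hle hdeg (v.1 : ℕ) v.2

lemma colv_vx (k : ℕ) (j : Fin 4) : colv ht htodd F hle hdeg (vx ht k j) =
    if j = 0 ∨ j = mm ht htodd F hle hdeg k then hubcol ht htodd F hle hdeg k
    else cB ht htodd F hle hdeg k j := by
  unfold colv vx
  have hv : ((fn ht k : Fin t) : ℕ) = k % t := rfl
  rw [hv, mm_mod ht htodd F hle hdeg k, hubcol_congr ht htodd F hle hdeg (Nat.mod_mod_of_dvd k dvd_rfl),
    cB_congr ht htodd F hle hdeg (Nat.mod_mod_of_dvd k dvd_rfl)]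

lemma col_spoke {k : ℕ} (hk : k < t) {j : Fin 4} (hj : j ≠ 0) (hs : SS ht F k j) :
    colv ht htodd F hle hdeg (vx ht k 0) = colv ht htodd F hle hdeg (vx ht k j) := by
  rw [colv_vx, colv_vx]
  rw [if_pos (Or.inl rfl)]
  rcases (SS_iff ht htodd F hle hdeg hk hj).mp hs with h | h
  · rw [if_neg, h, cB_aa]
    rw [h]
    push_neg
    exact ⟨aa_ne0 ht htodd F hle hdeg k, aa_ne_mm ht htodd F hle hdeg k⟩
  · rw [if_pos (Or.inr h)]

lemma col_link {k : ℕ} (hk : k < t) {j : Fin 4} (hL : LL ht F k j) :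
    colv ht htodd F hle hdeg (vx ht k j) =
    colv ht htodd F hle hdeg (vx ht (k + 1) (tw t k j)) := by
  obtain ⟨hj0, hjm⟩ := (LL_iff ht htodd F hle hdeg k j).mp hL
  rw [colv_vx, colv_vx, if_neg (by push_neg; exact ⟨hj0, hjm⟩)]
  by_cases h : tw t k j = mm ht htodd F hle hdeg (k + 1)
  · rw [if_pos (Or.inr h)]
    unfold hubcol
    have e1 : k + 1 + t - 1 = k + t := by omega
    rw [congrArg (fun z => cB ht htodd F hle hdeg z
      (tw t z (mm ht htodd F hle hdeg (k+1)))) e1]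
    rw [cB_congr ht htodd F hle hdeg (Nat.add_mod_right k t),
      tw_congr (t := t) (Nat.add_mod_right k t), ← h, tw_tw]
  · rw [if_neg (by push_neg; exact ⟨tw_ne0 hj0, h⟩)]
    rw [cB_step, stp_inv_apply]
    have hsw : Equiv.swap (aa ht htodd F hle hdeg (k+1)) (mm ht htodd F hle hdeg (k+1))
        (tw t k j) = tw t k j := by
      apply Equiv.swap_apply_of_ne_of_ne
      · rw [aa_succ]
        intro hc
        exact hjm (tw_inj hc)
      · exact h
    rw [hsw, tw_tw]

lemma col_adj {x y : Fin t × Fin 4} (hadj : F.Adj x y) :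
    colv ht htodd F hle hdeg x = colv ht htodd F hle hdeg y := by
  obtain ⟨x1, x2⟩ := x
  obtain ⟨y1, y2⟩ := y
  have hx : (x1, x2) = vx ht (x1 : ℕ) x2 := by
    unfold vx; rw [show fn ht (x1 : ℕ) = x1 from Fin.ext (Nat.mod_eq_of_lt x1.isLt)]
  have hy : (y1, y2) = vx ht (y1 : ℕ) y2 := by
    unfold vx; rw [show fn ht (y1 : ℕ) = y1 from Fin.ext (Nat.mod_eq_of_lt y1.isLt)]
  have h := hle hadj
  rw [flowerSnark, fromRel_adj] at h
  obtain ⟨hne, h | h⟩ := h <;>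
    rcases h with ⟨h1, h2, h3⟩ | ⟨h1, h2, h3⟩ | ⟨h1, h2, h3⟩
  · -- spoke, x hub
    simp only at h1 h2 h3
    subst h1
    rw [hx, hy]
    rw [h2] at hx hadj ⊢
    exact col_spoke ht htodd F hle hdeg x1.isLt h3 (by rw [hx, hy] at hadj; exact hadj)
  · -- straight link right
    simp only at h1 h2 h3
    have hk1 : (x1 : ℕ) + 1 < t := by rw [← h1]; exact y1.isLt
    have htw : tw t (x1 : ℕ) x2 = x2 := by
      unfold tw; rw [Nat.mod_eq_of_lt x1.isLt, if_neg (by omega)]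
    have hyv : (y1, y2) = vx ht ((x1 : ℕ) + 1) (tw t (x1 : ℕ) x2) := by
      unfold vx
      rw [htw, ← h2]
      exact Prod.ext (Fin.ext (by rw [fn_small ht hk1, h1])) rfl
    have hL : LL ht F (x1 : ℕ) x2 := by
      unfold LL; rw [← hx, ← hyv]; exact hadj
    rw [hx, hyv]
    exact col_link ht htodd F hle hdeg x1.isLt hL
  · -- twisted link right
    simp only at h1 h2 h3
    have hk : (x1 : ℕ) < t := x1.isLt
    have htw : tw t (x1 : ℕ) x2 = y2 := by
      unfold tw
      rw [Nat.mod_eq_of_lt hk, if_pos h1]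
      rcases h3 with ⟨ha, hb⟩ | ⟨ha, hb⟩ | ⟨ha, hb⟩ <;> rw [ha, hb] <;> rfl
    have hfe : fn ht ((x1 : ℕ) + 1) = y1 := by
      apply Fin.ext
      show ((x1 : ℕ) + 1) % t = (y1 : ℕ)
      rw [h1, Nat.sub_add_cancel (by omega), Nat.mod_self, h2]
    have hyv : (y1, y2) = vx ht ((x1 : ℕ) + 1) (tw t (x1 : ℕ) x2) := by
      unfold vx
      rw [htw, hfe]
    have hL : LL ht F (x1 : ℕ) x2 := by
      unfold LL; rw [← hx, ← hyv]; exact hadj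
    rw [hx, hyv]
    exact col_link ht htodd F hle hdeg hk hL
  · -- spoke, y hub
    simp only at h1 h2 h3
    subst h1
    rw [hx, hy]
    rw [h2] at hy hadj ⊢
    exact (col_spoke ht htodd F hle hdeg y1.isLt h3
      (by rw [hx, hy] at hadj; exact hadj.symm)).symm
  · -- straight link left
    simp only at h1 h2 h3
    have hk1 : (y1 : ℕ) + 1 < t := by rw [← h1]; exact x1.isLt
    have htw : tw t (y1 : ℕ) y2 = y2 := by
      unfold tw; rw [Nat.mod_eq_of_lt y1.isLt, if_neg (by omega)]
    have hxv : (x1, x2) = vx ht ((y1 : ℕ) + 1) (tw t (y1 : ℕ) y2) := by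
      unfold vx
      rw [htw, h2]
      exact Prod.ext (Fin.ext (by rw [fn_small ht hk1, h1])) rfl
    have hL : LL ht F (y1 : ℕ) y2 := by
      unfold LL; rw [← hy, ← hxv]; exact hadj.symm
    rw [hy, hxv]
    exact (col_link ht htodd F hle hdeg y1.isLt hL).symm
  · -- twisted link left
    simp only at h1 h2 h3
    have hk : (y1 : ℕ) < t := y1.isLt
    have htw : tw t (y1 : ℕ) y2 = x2 := by
      unfold tw
      rw [Nat.mod_eq_of_lt hk, if_pos h1]
      rcases h3 with ⟨ha, hb⟩ | ⟨ha, hb⟩ | ⟨ha, hb⟩ <;> rw [ha, hb] <;> rfl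
    have hfe : fn ht ((y1 : ℕ) + 1) = x1 := by
      apply Fin.ext
      show ((y1 : ℕ) + 1) % t = (x1 : ℕ)
      rw [h1, Nat.sub_add_cancel (by omega), Nat.mod_self, h2]
    have hxv : (x1, x2) = vx ht ((y1 : ℕ) + 1) (tw t (y1 : ℕ) y2) := by
      unfold vx
      rw [htw, hfe]
    have hL : LL ht F (y1 : ℕ) y2 := by
      unfold LL; rw [← hy, ← hxv]; exact hadj.symm
    rw [hy, hxv]
    exact (col_link ht htodd F hle hdeg hk hL).symm

lemma col_walk {u v : Fin t × Fin 4} (p : F.Walk u v) :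
    colv ht htodd F hle hdeg u = colv ht htodd F hle hdeg v := by
  induction p with
  | nil => rfl
  | cons h _ ih => exact (col_adj ht htodd F hle hdeg h).trans ih

lemma col_reach {u v : Fin t × Fin 4} (h : F.Reachable u v) :
    colv ht htodd F hle hdeg u = colv ht htodd F hle hdeg v :=
  h.elim (fun p => col_walk ht htodd F hle hdeg p)

omit hle hdeg htodd in
lemma vx_congr {a b : ℕ} (h : a % t = b % t) (j : Fin 4) : vx ht a j = vx ht b j := by
  unfold vx fn
  exact Prod.ext (Fin.ext h) rfl

lemma left_adj {k : ℕ} (hk1 : 1 ≤ k) (hk : k < t) {j : Fin 4}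
    (hL : LL ht F (k + t - 1) (tw t (k + t - 1) j)) :
    F.Adj (vx ht (k - 1) (tw t (k + t - 1) j)) (vx ht k j) := by
  unfold LL at hL
  rw [tw_tw] at hL
  have e : k + t - 1 + 1 = k + t := by omega
  rw [e, vx_period] at hL
  have hmod : (k + t - 1) % t = (k - 1) % t := by
    rw [show k + t - 1 = (k - 1) + t by omega, Nat.add_mod_right]
  rw [vx_congr ht hmod] at hL
  exact hL

lemma reach_left {k : ℕ} (hk1 : 1 ≤ k) (hk : k < t) (j : Fin 4) :
    ∃ j', F.Reachable (vx ht k j) (vx ht (k - 1) j') := by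
  have hLmm : LL ht F (k + t - 1) (tw t (k + t - 1) (mm ht htodd F hle hdeg k)) := by
    rw [leftL_iff ht htodd F hle hdeg]
    exact ⟨mm_ne0 ht htodd F hle hdeg k, fun h => aa_ne_mm ht htodd F hle hdeg k h.symm⟩
  have hS : F.Adj (vx ht k 0) (vx ht k (mm ht htodd F hle hdeg k)) :=
    (SS_iff ht htodd F hle hdeg hk (mm_ne0 ht htodd F hle hdeg k)).mpr (Or.inr rfl)
  have core : F.Reachable (vx ht k 0)
      (vx ht (k - 1) (tw t (k + t - 1) (mm ht htodd F hle hdeg k))) :=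
    (hS.reachable).trans (left_adj ht htodd F hle hdeg hk1 hk hLmm).symm.reachable
  by_cases h0 : j = 0
  · subst h0; exact ⟨_, core⟩
  · by_cases ha : j = aa ht htodd F hle hdeg k
    · have hS2 : F.Adj (vx ht k 0) (vx ht k j) :=
        (SS_iff ht htodd F hle hdeg hk h0).mpr (Or.inl ha)
      exact ⟨_, hS2.symm.reachable.trans core⟩
    · have hL : LL ht F (k + t - 1) (tw t (k + t - 1) j) := by
        rw [leftL_iff ht htodd F hle hdeg]; exact ⟨h0, ha⟩
      exact ⟨_, (left_adj ht htodd F hle hdeg hk1 hk hL).symm.reachable⟩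

lemma reach_zero (k : ℕ) (hk : k < t) : ∀ j : Fin 4,
    ∃ j', F.Reachable (vx ht k j) (vx ht 0 j') := by
  induction k using Nat.strong_induction_on with
  | _ k ih =>
    intro j
    rcases Nat.eq_zero_or_pos k with h0 | h0
    · subst h0; exact ⟨j, Reachable.refl _⟩
    · obtain ⟨j1, h1⟩ := reach_left ht htodd F hle hdeg h0 hk j
      obtain ⟨j2, h2⟩ := ih (k - 1) (by omega) (by omega) j1
      exact ⟨j2, h1.trans h2⟩

lemma reach_base (v : Fin t × Fin 4) :
    F.Reachable v (vx ht 0 0) ∨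
    F.Reachable v (vx ht 0 (other (aa ht htodd F hle hdeg 0) (mm ht htodd F hle hdeg 0))) := by
  obtain ⟨v1, v2⟩ := v
  have hv : (v1, v2) = vx ht (v1 : ℕ) v2 := by
    unfold vx; rw [show fn ht (v1 : ℕ) = v1 from Fin.ext (Nat.mod_eq_of_lt v1.isLt)]
  obtain ⟨j', hr⟩ := reach_zero ht htodd F hle hdeg (v1 : ℕ) v1.isLt v2
  rw [← hv] at hr
  have h0t : (0 : ℕ) < t := by omega
  by_cases h0 : j' = 0
  · subst h0; exact Or.inl hr
  · by_cases hsp : j' = aa ht htodd F hle hdeg 0 ∨ j' = mm ht htodd F hle hdeg 0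
    · have hS : F.Adj (vx ht 0 0) (vx ht 0 j') :=
        (SS_iff ht htodd F hle hdeg h0t h0).mpr hsp
      exact Or.inl (hr.trans hS.symm.reachable)
    · push_neg at hsp
      have hc := other_spec (aa ht htodd F hle hdeg 0) (mm ht htodd F hle hdeg 0) j'
        (aa_ne0 ht htodd F hle hdeg 0) (mm_ne0 ht htodd F hle hdeg 0)
        (aa_ne_mm ht htodd F hle hdeg 0) h0 hsp.1 hsp.2
      rw [hc] at hr
      exact Or.inr hr

lemma cB_inj {k : ℕ} {p q : Fin 4} (hp0 : p ≠ 0) (hq0 : q ≠ 0)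
    (hpm : p ≠ mm ht htodd F hle hdeg k) (hqm : q ≠ mm ht htodd F hle hdeg k) (hpq : p ≠ q) :
    cB ht htodd F hle hdeg k p ≠ cB ht htodd F hle hdeg k q := by
  set T := TT ht htodd F hle hdeg k with hT
  have happ : ∀ r : Fin 4, T (T⁻¹ r) = r := fun r => T.apply_symm_apply r
  have hp0' : T⁻¹ p ≠ 0 := fun h => hp0 (by rw [← happ p, h, hT, TT_fix0])
  have hq0' : T⁻¹ q ≠ 0 := fun h => hq0 (by rw [← happ q, h, hT, TT_fix0])
  have hpm' : T⁻¹ p ≠ mm ht htodd F hle hdeg 0 :=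
    fun h => hpm (by rw [← happ p, h, hT, TT_mm])
  have hqm' : T⁻¹ q ≠ mm ht htodd F hle hdeg 0 :=
    fun h => hqm (by rw [← happ q, h, hT, TT_mm])
  have hpq' : T⁻¹ p ≠ T⁻¹ q := fun h => hpq (by rw [← happ p, ← happ q, h])
  intro hcb
  unfold cB at hcb
  rw [← hT] at hcb
  by_cases h1 : T⁻¹ p = aa ht htodd F hle hdeg 0 <;>
    by_cases h2 : T⁻¹ q = aa ht htodd F hle hdeg 0
  · exact hpq' (h1.trans h2.symm)
  · simp [h1, h2] at hcb; exact h2 hcb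
  · simp [h1, h2] at hcb; exact h1 hcb
  · have e1 := other_spec _ _ _ (aa_ne0 ht htodd F hle hdeg 0) (mm_ne0 ht htodd F hle hdeg 0)
      (aa_ne_mm ht htodd F hle hdeg 0) hp0' h1 hpm'
    have e2 := other_spec _ _ _ (aa_ne0 ht htodd F hle hdeg 0) (mm_ne0 ht htodd F hle hdeg 0)
      (aa_ne_mm ht htodd F hle hdeg 0) hq0' h2 hqm'
    exact hpq' (e1.trans e2.symm)

omit hle hdeg htodd in
lemma sixcases : ∀ a m : Fin 4, a ≠ 0 → m ≠ 0 → a ≠ m →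
    (a = 1 ∧ m = 2 ∧ other a m = 3) ∨ (a = 1 ∧ m = 3 ∧ other a m = 2) ∨
    (a = 2 ∧ m = 1 ∧ other a m = 3) ∨ (a = 2 ∧ m = 3 ∧ other a m = 1) ∨
    (a = 3 ∧ m = 1 ∧ other a m = 2) ∨ (a = 3 ∧ m = 2 ∧ other a m = 1) := by decide

lemma keysum (k : ℕ) (g : Fin 4 → ℕ) : g 1 + g 2 + g 3 =
    g (aa ht htodd F hle hdeg k) + g (mm ht htodd F hle hdeg k) +
    g (other (aa ht htodd F hle hdeg k) (mm ht htodd F hle hdeg k)) := by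
  rcases sixcases (aa ht htodd F hle hdeg k) (mm ht htodd F hle hdeg k)
      (aa_ne0 ht htodd F hle hdeg k) (mm_ne0 ht htodd F hle hdeg k)
      (aa_ne_mm ht htodd F hle hdeg k) with
    ⟨ha, hm, ho⟩ | ⟨ha, hm, ho⟩ | ⟨ha, hm, ho⟩ | ⟨ha, hm, ho⟩ | ⟨ha, hm, ho⟩ | ⟨ha, hm, ho⟩ <;>
    rw [ho, ha, hm] <;> omega

omit hle hdeg htodd in
lemma bool_ne_iff {a b : Bool} (h : a ≠ b) : a = !b := by
  revert h; cases a <;> cases b <;> decide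

lemma colv_col0 {k : ℕ} (hk : k < t) : colv ht htodd F hle hdeg (vx ht k 0) =
    hubcol ht htodd F hle hdeg k := by
  rw [colv_vx, if_pos (Or.inl rfl)]

lemma colv_colm {k : ℕ} : colv ht htodd F hle hdeg (vx ht k (mm ht htodd F hle hdeg k)) =
    hubcol ht htodd F hle hdeg k := by
  rw [colv_vx, if_pos (Or.inr rfl)]

lemma colv_cola {k : ℕ} : colv ht htodd F hle hdeg (vx ht k (aa ht htodd F hle hdeg k)) =
    hubcol ht htodd F hle hdeg k := by
  have hcond : ¬(aa ht htodd F hle hdeg k = 0 ∨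
      aa ht htodd F hle hdeg k = mm ht htodd F hle hdeg k) := by
    push_neg
    exact ⟨aa_ne0 ht htodd F hle hdeg k, aa_ne_mm ht htodd F hle hdeg k⟩
  rw [colv_vx, if_neg hcond, cB_aa]

lemma colv_colc {k : ℕ} : colv ht htodd F hle hdeg
    (vx ht k (other (aa ht htodd F hle hdeg k) (mm ht htodd F hle hdeg k))) =
    ! hubcol ht htodd F hle hdeg k := by
  obtain ⟨hc0, hca, hcm⟩ := other_ne (aa ht htodd F hle hdeg k) (mm ht htodd F hle hdeg k)
    (aa_ne0 ht htodd F hle hdeg k) (mm_ne0 ht htodd F hle hdeg k)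
    (aa_ne_mm ht htodd F hle hdeg k)
  have hcond : ¬(other (aa ht htodd F hle hdeg k) (mm ht htodd F hle hdeg k) = 0 ∨
      other (aa ht htodd F hle hdeg k) (mm ht htodd F hle hdeg k) =
        mm ht htodd F hle hdeg k) := by
    push_neg; exact ⟨hc0, hcm⟩
  rw [colv_vx, if_neg hcond]
  have hne : cB ht htodd F hle hdeg k
      (other (aa ht htodd F hle hdeg k) (mm ht htodd F hle hdeg k)) ≠
      cB ht htodd F hle hdeg k (aa ht htodd F hle hdeg k) :=
    cB_inj ht htodd F hle hdeg hc0 (aa_ne0 ht htodd F hle hdeg k) hcm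
      (aa_ne_mm ht htodd F hle hdeg k) hca
  rw [cB_aa] at hne
  exact bool_ne_iff hne

lemma col_count {k : ℕ} (hk : k < t) (x : Bool) :
    ∑ j : Fin 4, (if colv ht htodd F hle hdeg (vx ht k j) = x then 1 else 0) =
    2 * (if hubcol ht htodd F hle hdeg k = x then 1 else 0) + 1 := by
  have hks := keysum ht htodd F hle hdeg k
    (fun j => if colv ht htodd F hle hdeg (vx ht k j) = x then 1 else 0)
  rw [colv_cola, colv_colm, colv_colc] at hks
  rw [Fin.sum_univ_four, colv_col0 ht htodd F hle hdeg hk]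
  cases hhub : hubcol ht htodd F hle hdeg k <;> cases x <;>
    rw [hhub] at hks <;> simp at hks ⊢ <;> omega

lemma hub0_true : hubcol ht htodd F hle hdeg 0 = true := by
  rw [← cB_aa]
  unfold cB
  have h1 : (TT ht htodd F hle hdeg 0)⁻¹ = 1 := rfl
  rw [h1]
  simp

lemma colv_c0_false : colv ht htodd F hle hdeg
    (vx ht 0 (other (aa ht htodd F hle hdeg 0) (mm ht htodd F hle hdeg 0))) = false := by
  rw [colv_colc, hub0_true]
  rfl

lemma total_count (x : Bool) :
    (Finset.univ.filter (fun v : Fin t × Fin 4 => colv ht htodd F hle hdeg v = x)).card =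
    2 * (∑ i : Fin t, if hubcol ht htodd F hle hdeg (i : ℕ) = x then 1 else 0) + t := by
  rw [Finset.card_filter, Fintype.sum_prod_type]
  have hcol : ∀ i : Fin t,
      (∑ j : Fin 4, if colv ht htodd F hle hdeg (i, j) = x then 1 else 0) =
      2 * (if hubcol ht htodd F hle hdeg (i : ℕ) = x then 1 else 0) + 1 := by
    intro i
    have hv : ∀ j : Fin 4, (i, j) = vx ht (i : ℕ) j := by
      intro j
      unfold vx; rw [show fn ht (i : ℕ) = i from Fin.ext (Nat.mod_eq_of_lt i.isLt)]
    calc (∑ j : Fin 4, if colv ht htodd F hle hdeg (i, j) = x then 1 else 0)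
        = ∑ j : Fin 4, if colv ht htodd F hle hdeg (vx ht (i : ℕ) j) = x then 1 else 0 := by
          exact Finset.sum_congr rfl (fun j _ => by rw [hv j])
      _ = 2 * (if hubcol ht htodd F hle hdeg (i : ℕ) = x then 1 else 0) + 1 :=
          col_count ht htodd F hle hdeg i.isLt x
  rw [Finset.sum_congr rfl (fun i _ => hcol i)]
  rw [Finset.sum_add_distrib, ← Finset.mul_sum, Finset.sum_const, Finset.card_univ,
    Fintype.card_fin, smul_eq_mul, mul_one]

end Main

end FSProof

/-- Every 2-factor of the Flower snark `J(t)`, `t ≥ 5` odd, consists of exactly two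
cycles, both of odd length; `J(t)` is odd 2-factored. -/
theorem flowerSnark_odd_two_factored (t : ℕ) (ht : 5 ≤ t) (htodd : Odd t)
    (F : SimpleGraph (Fin t × Fin 4)) (hF : IsTwoFactor (flowerSnark t) F) :
    Nat.card F.ConnectedComponent = 2 ∧
    ∀ c : F.ConnectedComponent, Odd (Nat.card c.supp) := by
  classical
  obtain ⟨hle, hdeg⟩ := hF
  let colC : F.ConnectedComponent → Bool :=
    SimpleGraph.ConnectedComponent.lift (FSProof.colv ht htodd F hle hdeg)
      (fun v w p _ => FSProof.col_walk ht htodd F hle hdeg p)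
  have hmk : ∀ v, colC (F.connectedComponentMk v) = FSProof.colv ht htodd F hle hdeg v :=
    fun v => rfl
  have htrue : FSProof.colv ht htodd F hle hdeg (FSProof.vx ht 0 0) = true := by
    rw [FSProof.colv_col0 ht htodd F hle hdeg (by omega), FSProof.hub0_true]
  have hfalse : FSProof.colv ht htodd F hle hdeg
      (FSProof.vx ht 0 (FSProof.other (FSProof.aa ht htodd F hle hdeg 0)
        (FSProof.mm ht htodd F hle hdeg 0))) = false :=
    FSProof.colv_c0_false ht htodd F hle hdeg
  have hsame : ∀ v w, FSProof.colv ht htodd F hle hdeg v = FSProof.colv ht htodd F hle hdeg w →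
      F.connectedComponentMk v = F.connectedComponentMk w := by
    intro v w hvw
    rcases FSProof.reach_base ht htodd F hle hdeg v with hv | hv <;>
      rcases FSProof.reach_base ht htodd F hle hdeg w with hw | hw
    · exact SimpleGraph.ConnectedComponent.sound (hv.trans hw.symm)
    · exfalso
      have h1 := FSProof.col_reach ht htodd F hle hdeg hv
      have h2 := FSProof.col_reach ht htodd F hle hdeg hw
      rw [htrue] at h1
      rw [hfalse] at h2
      rw [hvw] at h1
      rw [h2] at h1
      simp at h1
    · exfalso
      have h1 := FSProof.col_reach ht htodd F hle hdeg hv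
      have h2 := FSProof.col_reach ht htodd F hle hdeg hw
      rw [hfalse] at h1
      rw [htrue] at h2
      rw [hvw] at h1
      rw [h2] at h1
      simp at h1
    · exact SimpleGraph.ConnectedComponent.sound (hv.trans hw.symm)
  have hinj : Function.Injective colC := by
    intro c1 c2 h12
    induction c1 using SimpleGraph.ConnectedComponent.ind with | _ v =>
    induction c2 using SimpleGraph.ConnectedComponent.ind with | _ w =>
    exact hsame v w h12
  have hbij : Function.Bijective colC := by
    refine ⟨hinj, ?_⟩
    intro x
    cases x
    · exact ⟨F.connectedComponentMk (FSProof.vx ht 0 (FSProof.other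
        (FSProof.aa ht htodd F hle hdeg 0) (FSProof.mm ht htodd F hle hdeg 0))), hfalse⟩
    · exact ⟨F.connectedComponentMk (FSProof.vx ht 0 0), htrue⟩
  constructor
  · rw [Nat.card_eq_of_bijective colC hbij]
    simp [Nat.card_eq_fintype_card]
  · intro c
    induction c using SimpleGraph.ConnectedComponent.ind with | _ u =>
    have hsupp : (F.connectedComponentMk u).supp =
        {v | FSProof.colv ht htodd F hle hdeg v = FSProof.colv ht htodd F hle hdeg u} := by
      ext v
      rw [SimpleGraph.ConnectedComponent.mem_supp_iff]
      constructor
      · intro hvc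
        have hr : F.Reachable v u := SimpleGraph.ConnectedComponent.exact hvc
        exact FSProof.col_reach ht htodd F hle hdeg hr
      · intro hcv
        exact hsame v u hcv
    rw [hsupp, Nat.card_coe_set_eq]
    have hset : {v | FSProof.colv ht htodd F hle hdeg v = FSProof.colv ht htodd F hle hdeg u} =
        ↑(Finset.univ.filter (fun v : Fin t × Fin 4 =>
          FSProof.colv ht htodd F hle hdeg v = FSProof.colv ht htodd F hle hdeg u)) := by
      ext v; simp
    rw [hset, Set.ncard_coe_finset,
      FSProof.total_count ht htodd F hle hdeg (FSProof.colv ht htodd F hle hdeg u)]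
    obtain ⟨w, hw⟩ := htodd
    rw [Nat.odd_iff]
    omega
end

section
/- Let t ≥ 5 be odd. The Flower snark J(t) has a 2-factor consisting of two cycles of lengths t and 3t, and also a 2-factor consisting of two cycles of lengths t+4 and 3t−4. In particular, J(t) is not 2-factor isomorphic. -/
open SimpleGraph

section helpers
variable {V : Type*}

lemma neighborSet_pair (F : SimpleGraph V) (v a b : V) (hab : a ≠ b)
    (h : ∀ x, F.Adj v x ↔ x = a ∨ x = b) : (F.neighborSet v).ncard = 2 := by
  have hs : F.neighborSet v = {a, b} := by
    ext x
    simp only [mem_neighborSet, Set.mem_insert_iff, Set.mem_singleton_iff, h]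
  rw [hs, Set.ncard_pair hab]

lemma walk_closed {F : SimpleGraph V} {S : Set V}
    (hS : ∀ x y, F.Adj x y → x ∈ S → y ∈ S) {a b : V} (w : F.Walk a b) :
    a ∈ S → b ∈ S := by
  induction w with
  | nil => exact id
  | cons h p ih => exact fun ha => ih (hS _ _ h ha)

lemma supp_eq {F : SimpleGraph V} {S : Set V} {a : V} (ha : a ∈ S)
    (h1 : ∀ p ∈ S, F.Reachable p a)
    (hS : ∀ x y, F.Adj x y → x ∈ S → y ∈ S) :
    (F.connectedComponentMk a).supp = S := by
  ext p
  simp only [ConnectedComponent.mem_supp_iff, ConnectedComponent.eq]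
  constructor
  · intro h
    obtain ⟨w⟩ := h.symm
    exact walk_closed hS w ha
  · exact h1 p

lemma card_components_two {F : SimpleGraph V} {a b : V}
    (hne : F.connectedComponentMk a ≠ F.connectedComponentMk b)
    (hcov : ∀ p, F.Reachable p a ∨ F.Reachable p b) :
    Nat.card F.ConnectedComponent = 2 := by
  rw [Nat.card_eq_two_iff]
  refine ⟨_, _, hne, ?_⟩
  ext c
  simp only [Set.mem_insert_iff, Set.mem_singleton_iff, Set.mem_univ, iff_true]
  induction c using ConnectedComponent.ind with
  | _ p =>
    rcases hcov p with h | h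
    · exact Or.inl (ConnectedComponent.sound h)
    · exact Or.inr (ConnectedComponent.sound h)

lemma iso_supp_card {W : Type*} {F : SimpleGraph V} {G : SimpleGraph W}
    (e : F ≃g G) (v : V) :
    Nat.card (G.connectedComponentMk (e v)).supp
      = Nat.card (F.connectedComponentMk v).supp := by
  have key : ∀ x : V, G.connectedComponentMk (e x) = G.connectedComponentMk (e v)
      ↔ F.connectedComponentMk x = F.connectedComponentMk v := by
    intro x
    rw [ConnectedComponent.eq, ConnectedComponent.eq]
    constructor
    · intro h
      have := h.map e.symm.toHom
      simpa using this
    · intro h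
      exact h.map e.toHom
  refine Nat.card_congr ?_
  refine ⟨fun x => ⟨e.symm x.1, ?_⟩, fun x => ⟨e x.1, ?_⟩, ?_, ?_⟩
  · obtain ⟨x, hx⟩ := x
    simp only [ConnectedComponent.mem_supp_iff] at hx ⊢
    rw [← key]
    simpa using hx
  · obtain ⟨x, hx⟩ := x
    simp only [ConnectedComponent.mem_supp_iff] at hx ⊢
    rw [key]
    exact hx
  · rintro ⟨x, hx⟩; simp
  · rintro ⟨x, hx⟩; simp
end helpers

lemma fv0 : ((0:Fin 4):ℕ) = 0 := rfl
lemma fv1 : ((1:Fin 4):ℕ) = 1 := rfl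
lemma fv2 : ((2:Fin 4):ℕ) = 2 := rfl
lemma fv3 : ((3:Fin 4):ℕ) = 3 := rfl

lemma pair_ne {t : ℕ} {i i' : Fin t} {j j' : Fin 4}
    (h : ¬((i:ℕ) = (i':ℕ) ∧ (j:ℕ) = (j':ℕ))) : (i, j) ≠ (i', j') := by
  intro e
  simp only [Prod.mk.injEq] at e
  exact h ⟨by rw [e.1], by rw [e.2]⟩

def fRel1 (t : ℕ) (a b : Fin t × Fin 4) : Prop :=
  ((a.1 : ℕ) = (b.1 : ℕ) ∧ a.2 = 0 ∧ (b.2 = 1 ∨ b.2 = 2)) ∨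
  ((b.1 : ℕ) = (a.1 : ℕ) + 1 ∧ a.2 = b.2 ∧
    ((a.2 = 1 ∧ (a.1 : ℕ) % 2 = 0) ∨ (a.2 = 2 ∧ (a.1 : ℕ) % 2 = 1) ∨ a.2 = 3)) ∨
  ((a.1 : ℕ) = t - 1 ∧ (b.1 : ℕ) = 0 ∧ ((a.2 = 1 ∧ b.2 = 2) ∨ (a.2 = 3 ∧ b.2 = 3)))

def fac1 (t : ℕ) : SimpleGraph (Fin t × Fin 4) := SimpleGraph.fromRel (fRel1 t)

lemma fac1_adj {t : ℕ} {a b : Fin t × Fin 4} (hne : a ≠ b) (h : fRel1 t a b) :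
    (fac1 t).Adj a b := by
  rw [fac1, fromRel_adj]
  exact ⟨hne, Or.inl h⟩

variable {t : ℕ}

lemma adj1_hu (i : Fin t) : (fac1 t).Adj (i, 0) (i, 1) :=
  fac1_adj (pair_ne (by simp [fv0, fv1])) (Or.inl ⟨rfl, rfl, Or.inl rfl⟩)

lemma adj1_hv (i : Fin t) : (fac1 t).Adj (i, 0) (i, 2) :=
  fac1_adj (pair_ne (by simp [fv0, fv2])) (Or.inl ⟨rfl, rfl, Or.inr rfl⟩)

lemma adj1_uu {i i' : Fin t} (h : (i':ℕ) = (i:ℕ) + 1) (he : (i:ℕ) % 2 = 0) :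
    (fac1 t).Adj (i, 1) (i', 1) :=
  fac1_adj (pair_ne (by omega)) (Or.inr (Or.inl ⟨h, rfl, Or.inl ⟨rfl, he⟩⟩))

lemma adj1_vv {i i' : Fin t} (h : (i':ℕ) = (i:ℕ) + 1) (he : (i:ℕ) % 2 = 1) :
    (fac1 t).Adj (i, 2) (i', 2) :=
  fac1_adj (pair_ne (by omega)) (Or.inr (Or.inl ⟨h, rfl, Or.inr (Or.inl ⟨rfl, he⟩)⟩))

lemma adj1_ww {i i' : Fin t} (h : (i':ℕ) = (i:ℕ) + 1) :
    (fac1 t).Adj (i, 3) (i', 3) :=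
  fac1_adj (pair_ne (by omega)) (Or.inr (Or.inl ⟨h, rfl, Or.inr (Or.inr rfl)⟩))

lemma adj1_uv {i i' : Fin t} (ht : 2 ≤ t) (h : (i:ℕ) = t - 1) (h' : (i':ℕ) = 0) :
    (fac1 t).Adj (i, 1) (i', 2) :=
  fac1_adj (pair_ne (by simp [fv1, fv2])) (Or.inr (Or.inr ⟨h, h', Or.inl ⟨rfl, rfl⟩⟩))

lemma adj1_wtw {i i' : Fin t} (ht : 2 ≤ t) (h : (i:ℕ) = t - 1) (h' : (i':ℕ) = 0) :
    (fac1 t).Adj (i, 3) (i', 3) :=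
  fac1_adj (pair_ne (by omega)) (Or.inr (Or.inr ⟨h, h', Or.inr ⟨rfl, rfl⟩⟩))

lemma fac1_deg (ht : 5 ≤ t) (hto : t % 2 = 1) (v : Fin t × Fin 4) :
    ((fac1 t).neighborSet v).ncard = 2 := by
  obtain ⟨i, j⟩ := v
  have hi := i.isLt
  have mp : ∀ (i' : Fin t) (j' : Fin 4), (fac1 t).Adj (i, j) (i', j') →
      ((i:ℕ), (j:ℕ), (i':ℕ), (j':ℕ)) = ((i:ℕ), (j:ℕ), (i':ℕ), (j':ℕ)) := by
    intros; rfl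
  clear mp
  fin_cases j
  · -- hub
    apply neighborSet_pair _ _ (i, (1:Fin 4)) (i, (2:Fin 4)) (pair_ne (by simp [fv1, fv2]))
    rintro ⟨i', j'⟩
    constructor
    · intro h
      rw [fac1, fromRel_adj] at h
      obtain ⟨hne, h⟩ := h
      unfold fRel1 at h
      simp only [ne_eq, Prod.mk.injEq, Fin.ext_iff, fv0, fv1, fv2, fv3, Fin.val_mk] at h ⊢
      have := i'.isLt
      omega
    · rintro (h | h) <;> rw [h]
      · exact adj1_hu i
      · exact adj1_hv i
  · -- u_i
    by_cases he : (i:ℕ) % 2 = 0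
    · by_cases hl : (i:ℕ) = t - 1
      · apply neighborSet_pair _ _ (i, (0:Fin 4)) (⟨0, by omega⟩, (2:Fin 4))
          (pair_ne (by simp [fv0, fv2]))
        rintro ⟨i', j'⟩
        constructor
        · intro h
          rw [fac1, fromRel_adj] at h
          obtain ⟨hne, h⟩ := h
          unfold fRel1 at h
          simp only [ne_eq, Prod.mk.injEq, Fin.ext_iff, fv0, fv1, fv2, fv3, Fin.val_mk] at h ⊢
          have := i'.isLt
          omega
        · rintro (h | h) <;> rw [h]
          · exact (adj1_hu i).symm
          · exact adj1_uv (by omega) hl (by simp)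
      · apply neighborSet_pair _ _ (i, (0:Fin 4)) (⟨(i:ℕ)+1, by omega⟩, (1:Fin 4))
          (pair_ne (by simp [fv0, fv1]))
        rintro ⟨i', j'⟩
        constructor
        · intro h
          rw [fac1, fromRel_adj] at h
          obtain ⟨hne, h⟩ := h
          unfold fRel1 at h
          simp only [ne_eq, Prod.mk.injEq, Fin.ext_iff, fv0, fv1, fv2, fv3, Fin.val_mk] at h ⊢
          have := i'.isLt
          omega
        · rintro (h | h) <;> rw [h]
          · exact (adj1_hu i).symm
          · exact adj1_uu (by simp) he
    · apply neighborSet_pair _ _ (i, (0:Fin 4)) (⟨(i:ℕ)-1, by omega⟩, (1:Fin 4))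
        (pair_ne (by simp [fv0, fv1]))
      rintro ⟨i', j'⟩
      constructor
      · intro h
        rw [fac1, fromRel_adj] at h
        obtain ⟨hne, h⟩ := h
        unfold fRel1 at h
        simp only [ne_eq, Prod.mk.injEq, Fin.ext_iff, fv0, fv1, fv2, fv3, Fin.val_mk] at h ⊢
        have := i'.isLt
        omega
      · rintro (h | h) <;> rw [h]
        · exact (adj1_hu i).symm
        · exact (adj1_uu (by simp only [Fin.val_mk]; omega) (by simp only [Fin.val_mk]; omega)).symm
  · -- v_i
    by_cases h0 : (i:ℕ) = 0
    · apply neighborSet_pair _ _ (i, (0:Fin 4)) (⟨t-1, by omega⟩, (1:Fin 4))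
        (pair_ne (by simp [fv0, fv1]))
      rintro ⟨i', j'⟩
      constructor
      · intro h
        rw [fac1, fromRel_adj] at h
        obtain ⟨hne, h⟩ := h
        unfold fRel1 at h
        simp only [ne_eq, Prod.mk.injEq, Fin.ext_iff, fv0, fv1, fv2, fv3, Fin.val_mk] at h ⊢
        have := i'.isLt
        omega
      · rintro (h | h) <;> rw [h]
        · exact (adj1_hv i).symm
        · exact (adj1_uv (by omega) (by simp) h0).symm
    · by_cases he : (i:ℕ) % 2 = 1
      · apply neighborSet_pair _ _ (i, (0:Fin 4)) (⟨(i:ℕ)+1, by omega⟩, (2:Fin 4))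
          (pair_ne (by simp [fv0, fv2]))
        rintro ⟨i', j'⟩
        constructor
        · intro h
          rw [fac1, fromRel_adj] at h
          obtain ⟨hne, h⟩ := h
          unfold fRel1 at h
          simp only [ne_eq, Prod.mk.injEq, Fin.ext_iff, fv0, fv1, fv2, fv3, Fin.val_mk] at h ⊢
          have := i'.isLt
          omega
        · rintro (h | h) <;> rw [h]
          · exact (adj1_hv i).symm
          · exact adj1_vv (by simp) he
      · apply neighborSet_pair _ _ (i, (0:Fin 4)) (⟨(i:ℕ)-1, by omega⟩, (2:Fin 4))
          (pair_ne (by simp [fv0, fv2]))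
        rintro ⟨i', j'⟩
        constructor
        · intro h
          rw [fac1, fromRel_adj] at h
          obtain ⟨hne, h⟩ := h
          unfold fRel1 at h
          simp only [ne_eq, Prod.mk.injEq, Fin.ext_iff, fv0, fv1, fv2, fv3, Fin.val_mk] at h ⊢
          have := i'.isLt
          omega
        · rintro (h | h) <;> rw [h]
          · exact (adj1_hv i).symm
          · exact (adj1_vv (by simp only [Fin.val_mk]; omega) (by simp only [Fin.val_mk]; omega)).symm
  · -- w_i
    by_cases h0 : (i:ℕ) = 0
    · apply neighborSet_pair _ _ (⟨1, by omega⟩, (3:Fin 4)) (⟨t-1, by omega⟩, (3:Fin 4))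
        (pair_ne (by simp only [Fin.val_mk]; omega))
      rintro ⟨i', j'⟩
      constructor
      · intro h
        rw [fac1, fromRel_adj] at h
        obtain ⟨hne, h⟩ := h
        unfold fRel1 at h
        simp only [ne_eq, Prod.mk.injEq, Fin.ext_iff, fv0, fv1, fv2, fv3, Fin.val_mk] at h ⊢
        have := i'.isLt
        omega
      · rintro (h | h) <;> rw [h]
        · exact adj1_ww (by simp only [Fin.val_mk]; omega)
        · exact (adj1_wtw (by omega) (by simp) h0).symm
    · by_cases hl : (i:ℕ) = t - 1
      · apply neighborSet_pair _ _ (⟨(i:ℕ)-1, by omega⟩, (3:Fin 4)) (⟨0, by omega⟩, (3:Fin 4))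
          (pair_ne (by simp only [Fin.val_mk]; omega))
        rintro ⟨i', j'⟩
        constructor
        · intro h
          rw [fac1, fromRel_adj] at h
          obtain ⟨hne, h⟩ := h
          unfold fRel1 at h
          simp only [ne_eq, Prod.mk.injEq, Fin.ext_iff, fv0, fv1, fv2, fv3, Fin.val_mk] at h ⊢
          have := i'.isLt
          omega
        · rintro (h | h) <;> rw [h]
          · exact (adj1_ww (by simp only [Fin.val_mk]; omega)).symm
          · exact adj1_wtw (by omega) hl (by simp)
      · apply neighborSet_pair _ _ (⟨(i:ℕ)-1, by omega⟩, (3:Fin 4)) (⟨(i:ℕ)+1, by omega⟩, (3:Fin 4))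
          (pair_ne (by simp only [Fin.val_mk]; omega))
        rintro ⟨i', j'⟩
        constructor
        · intro h
          rw [fac1, fromRel_adj] at h
          obtain ⟨hne, h⟩ := h
          unfold fRel1 at h
          simp only [ne_eq, Prod.mk.injEq, Fin.ext_iff, fv0, fv1, fv2, fv3, Fin.val_mk] at h ⊢
          have := i'.isLt
          omega
        · rintro (h | h) <;> rw [h]
          · exact (adj1_ww (by simp only [Fin.val_mk]; omega)).symm
          · exact adj1_ww (by simp)

lemma fRel1_sub (ht : 5 ≤ t) {a b : Fin t × Fin 4} (h : fRel1 t a b) :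
    ((a.1 = b.1 ∧ a.2 = 0 ∧ b.2 ≠ 0) ∨
     ((b.1:ℕ) = (a.1:ℕ)+1 ∧ a.2 = b.2 ∧ a.2 ≠ 0) ∨
     ((a.1:ℕ) = t-1 ∧ (b.1:ℕ) = 0 ∧
       ((a.2 = 1 ∧ b.2 = 2) ∨ (a.2 = 2 ∧ b.2 = 1) ∨ (a.2 = 3 ∧ b.2 = 3)))) := by
  rcases h with ⟨h1, h2, h3⟩ | ⟨h1, h2, h3⟩ | ⟨h1, h2, h3⟩
  · refine Or.inl ⟨Fin.ext h1, h2, ?_⟩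
    rcases h3 with h3 | h3 <;> rw [h3] <;> decide
  · refine Or.inr (Or.inl ⟨h1, h2, ?_⟩)
    rcases h3 with ⟨h3, -⟩ | ⟨h3, -⟩ | h3 <;> rw [h3] <;> decide
  · exact Or.inr (Or.inr ⟨h1, h2, by tauto⟩)

lemma fac1_le (ht : 5 ≤ t) : fac1 t ≤ flowerSnark t := by
  intro a b h
  rw [fac1, fromRel_adj] at h
  rw [flowerSnark, fromRel_adj]
  obtain ⟨hne, h⟩ := h
  refine ⟨hne, ?_⟩
  rcases h with h | h
  · exact Or.inl (fRel1_sub ht h)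
  · exact Or.inr (fRel1_sub ht h)

lemma reach1_w (ht : 5 ≤ t) : ∀ (i : ℕ) (h : i < t),
    (fac1 t).Reachable (⟨i, h⟩, 3) (⟨0, by omega⟩, 3) := by
  intro i
  induction i with
  | zero => exact fun h => Reachable.refl _
  | succ n ih =>
    intro h
    have ha : (fac1 t).Adj (⟨n, by omega⟩, 3) (⟨n+1, h⟩, 3) :=
      adj1_ww (by simp)
    exact ha.symm.reachable.trans (ih (by omega))

lemma reach1_h (ht : 5 ≤ t) : ∀ (i : ℕ) (h : i < t),
    (fac1 t).Reachable (⟨i, h⟩, 0) (⟨0, by omega⟩, 0) := by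
  intro i
  induction i with
  | zero => exact fun h => Reachable.refl _
  | succ n ih =>
    intro h
    have step : (fac1 t).Reachable (⟨n, by omega⟩, 0) (⟨n+1, h⟩, 0) := by
      by_cases he : n % 2 = 0
      · exact (adj1_hu _).reachable.trans
          (((adj1_uu (i := ⟨n, by omega⟩) (i' := ⟨n+1, h⟩) (by simp) (by simpa)).reachable).trans
            (adj1_hu _).symm.reachable)
      · exact (adj1_hv _).reachable.trans
          (((adj1_vv (i := ⟨n, by omega⟩) (i' := ⟨n+1, h⟩) (by simp) (by simp; omega)).reachable).trans
            (adj1_hv _).symm.reachable)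
    exact step.symm.trans (ih (by omega))

lemma clos1 (a b : Fin t × Fin 4) (h : (fac1 t).Adj a b) :
    (a.2:ℕ) = 3 ↔ (b.2:ℕ) = 3 := by
  rw [fac1, fromRel_adj] at h
  obtain ⟨-, h⟩ := h
  unfold fRel1 at h
  simp only [Fin.ext_iff, fv0, fv1, fv2, fv3] at h
  omega

lemma reach1_cov (ht : 5 ≤ t) (p : Fin t × Fin 4) :
    ((p.2:ℕ) = 3 ∧ (fac1 t).Reachable p (⟨0, by omega⟩, 3)) ∨
    ((p.2:ℕ) ≠ 3 ∧ (fac1 t).Reachable p (⟨0, by omega⟩, 0)) := by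
  obtain ⟨i, j⟩ := p
  have hh : (fac1 t).Reachable (i, 0) (⟨0, by omega⟩, 0) := by
    have := reach1_h ht i i.isLt
    exact this
  fin_cases j
  · exact Or.inr ⟨by simp [fv0], hh⟩
  · exact Or.inr ⟨by simp [fv1], (adj1_hu i).symm.reachable.trans hh⟩
  · exact Or.inr ⟨by simp [fv2], (adj1_hv i).symm.reachable.trans hh⟩
  · refine Or.inl ⟨rfl, ?_⟩
    have := reach1_w ht i i.isLt
    exact this

def S3 (t : ℕ) : Set (Fin t × Fin 4) := {p | (p.2:ℕ) = 3}

lemma supp1_w (ht : 5 ≤ t) :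
    ((fac1 t).connectedComponentMk (⟨0, by omega⟩, 3)).supp = S3 t := by
  refine supp_eq rfl ?_ ?_
  · intro p hp
    rcases reach1_cov ht p with ⟨-, r⟩ | ⟨hn, -⟩
    · exact r
    · exact absurd hp hn
  · intro x y hxy hx
    exact (clos1 x y hxy).mp hx

lemma supp1_h (ht : 5 ≤ t) :
    ((fac1 t).connectedComponentMk (⟨0, by omega⟩, 0)).supp = (S3 t)ᶜ := by
  refine supp_eq (by simp [S3, fv0]) ?_ ?_
  · intro p hp
    rcases reach1_cov ht p with ⟨h3, -⟩ | ⟨-, r⟩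
    · exact absurd h3 hp
    · exact r
  · intro x y hxy hx h3
    exact hx ((clos1 x y hxy).mpr h3)

lemma card_S3 (ht : 5 ≤ t) : Nat.card ↥(S3 t) = t := by
  have e : ↥(S3 t) ≃ Fin t := by
    refine ⟨fun x => x.1.1, fun i => ⟨(i, 3), rfl⟩, ?_, fun i => rfl⟩
    rintro ⟨⟨i, j⟩, hj⟩
    simp only [S3, Set.mem_setOf_eq] at hj
    have hj' : (3:Fin 4) = j := Fin.ext (by exact hj.symm)
    subst hj'
    rfl
  rw [Nat.card_congr e, Nat.card_eq_fintype_card, Fintype.card_fin]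

lemma card_S3c (ht : 5 ≤ t) : Nat.card ↥((S3 t)ᶜ) = 3 * t := by
  have h1 : (S3 t).ncard + (S3 t)ᶜ.ncard = Nat.card (Fin t × Fin 4) :=
    Set.ncard_add_ncard_compl _ (Set.toFinite _) (Set.toFinite _)
  have h2 : Nat.card (Fin t × Fin 4) = 4 * t := by
    simp [Nat.card_eq_fintype_card]
    ring
  have h3 : (S3 t).ncard = t := by
    rw [← Nat.card_coe_set_eq, card_S3 ht]
  rw [Nat.card_coe_set_eq]
  omega

lemma fac1_ne (ht : 5 ≤ t) :
    (fac1 t).connectedComponentMk (⟨0, by omega⟩, 3)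
      ≠ (fac1 t).connectedComponentMk (⟨0, by omega⟩, 0) := by
  intro h
  have hm : ((⟨0, by omega⟩, (3:Fin 4)) : Fin t × Fin 4) ∈ (S3 t)ᶜ := by
    rw [← supp1_h ht, ← h, ConnectedComponent.mem_supp_iff]
  exact hm rfl

lemma part1 (ht : 5 ≤ t) (hto : t % 2 = 1) :
    ∃ F : SimpleGraph (Fin t × Fin 4), IsTwoFactor (flowerSnark t) F ∧
      Nat.card F.ConnectedComponent = 2 ∧
      ∃ c₁ c₂ : F.ConnectedComponent, c₁ ≠ c₂ ∧
        Nat.card c₁.supp = t ∧ Nat.card c₂.supp = 3 * t := by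
  refine ⟨fac1 t, ⟨fac1_le ht, fac1_deg ht hto⟩, ?_, ?_⟩
  · apply card_components_two (fac1_ne ht)
    intro p
    rcases reach1_cov ht p with ⟨-, r⟩ | ⟨-, r⟩
    · exact Or.inl r
    · exact Or.inr r
  · refine ⟨(fac1 t).connectedComponentMk (⟨0, by omega⟩, 3),
      (fac1 t).connectedComponentMk (⟨0, by omega⟩, 0), fac1_ne ht, ?_, ?_⟩
    · rw [supp1_w ht]; exact card_S3 ht
    · rw [supp1_h ht]; exact card_S3c ht

def fRel2 (t : ℕ) (a b : Fin t × Fin 4) : Prop :=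
  ((a.1 : ℕ) = (b.1 : ℕ) ∧ a.2 = 0 ∧
    (b.2 = 1 ∨ (b.2 = 2 ∧ 2 ≤ (a.1 : ℕ)) ∨ (b.2 = 3 ∧ (a.1 : ℕ) ≤ 1))) ∨
  ((b.1 : ℕ) = (a.1 : ℕ) + 1 ∧ a.2 = b.2 ∧
    ((a.2 = 1 ∧ (a.1 : ℕ) % 2 = 0) ∨ (a.2 = 2 ∧ ((a.1 : ℕ) % 2 = 1 ∨ (a.1 : ℕ) = 0)) ∨
      (a.2 = 3 ∧ (a.1 : ℕ) ≠ 0))) ∨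
  ((a.1 : ℕ) = t - 1 ∧ (b.1 : ℕ) = 0 ∧ ((a.2 = 1 ∧ b.2 = 2) ∨ (a.2 = 3 ∧ b.2 = 3)))

def fac2 (t : ℕ) : SimpleGraph (Fin t × Fin 4) := SimpleGraph.fromRel (fRel2 t)

lemma fac2_adj {t : ℕ} {a b : Fin t × Fin 4} (hne : a ≠ b) (h : fRel2 t a b) :
    (fac2 t).Adj a b := by
  rw [fac2, fromRel_adj]
  exact ⟨hne, Or.inl h⟩

lemma adj2_hu (i : Fin t) : (fac2 t).Adj (i, 0) (i, 1) :=
  fac2_adj (pair_ne (by simp [fv0, fv1])) (Or.inl ⟨rfl, rfl, Or.inl rfl⟩)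

lemma adj2_hv {i : Fin t} (h2 : 2 ≤ (i:ℕ)) : (fac2 t).Adj (i, 0) (i, 2) :=
  fac2_adj (pair_ne (by simp [fv0, fv2])) (Or.inl ⟨rfl, rfl, Or.inr (Or.inl ⟨rfl, h2⟩)⟩)

lemma adj2_hw {i : Fin t} (h1 : (i:ℕ) ≤ 1) : (fac2 t).Adj (i, 0) (i, 3) :=
  fac2_adj (pair_ne (by simp [fv0, fv3])) (Or.inl ⟨rfl, rfl, Or.inr (Or.inr ⟨rfl, h1⟩)⟩)

lemma adj2_uu {i i' : Fin t} (h : (i':ℕ) = (i:ℕ) + 1) (he : (i:ℕ) % 2 = 0) :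
    (fac2 t).Adj (i, 1) (i', 1) :=
  fac2_adj (pair_ne (by omega)) (Or.inr (Or.inl ⟨h, rfl, Or.inl ⟨rfl, he⟩⟩))

lemma adj2_vv {i i' : Fin t} (h : (i':ℕ) = (i:ℕ) + 1) (he : (i:ℕ) % 2 = 1 ∨ (i:ℕ) = 0) :
    (fac2 t).Adj (i, 2) (i', 2) :=
  fac2_adj (pair_ne (by omega)) (Or.inr (Or.inl ⟨h, rfl, Or.inr (Or.inl ⟨rfl, he⟩)⟩))

lemma adj2_ww {i i' : Fin t} (h : (i':ℕ) = (i:ℕ) + 1) (h0 : (i:ℕ) ≠ 0) :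
    (fac2 t).Adj (i, 3) (i', 3) :=
  fac2_adj (pair_ne (by omega)) (Or.inr (Or.inl ⟨h, rfl, Or.inr (Or.inr ⟨rfl, h0⟩)⟩))

lemma adj2_uv {i i' : Fin t} (ht : 2 ≤ t) (h : (i:ℕ) = t - 1) (h' : (i':ℕ) = 0) :
    (fac2 t).Adj (i, 1) (i', 2) :=
  fac2_adj (pair_ne (by simp [fv1, fv2])) (Or.inr (Or.inr ⟨h, h', Or.inl ⟨rfl, rfl⟩⟩))

lemma adj2_wtw {i i' : Fin t} (ht : 2 ≤ t) (h : (i:ℕ) = t - 1) (h' : (i':ℕ) = 0) :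
    (fac2 t).Adj (i, 3) (i', 3) :=
  fac2_adj (pair_ne (by omega)) (Or.inr (Or.inr ⟨h, h', Or.inr ⟨rfl, rfl⟩⟩))

lemma fac2_deg (ht : 5 ≤ t) (hto : t % 2 = 1) (v : Fin t × Fin 4) :
    ((fac2 t).neighborSet v).ncard = 2 := by
  obtain ⟨i, j⟩ := v
  have hi := i.isLt
  fin_cases j
  · by_cases h1 : (i:ℕ) ≤ 1
    ·
      apply neighborSet_pair _ _ (i, (1:Fin 4)) (i, (3:Fin 4))
          (pair_ne (by simp [fv1, fv3]))
      rintro ⟨i', j'⟩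
      constructor
      · intro h
        rw [fac2, fromRel_adj] at h
        obtain ⟨hne, h⟩ := h
        unfold fRel2 at h
        simp only [ne_eq, Prod.mk.injEq, Fin.ext_iff, fv0, fv1, fv2, fv3, Fin.val_mk] at h ⊢
        have := i'.isLt
        omega
      · rintro (h | h) <;> rw [h]
        · exact adj2_hu i
        · exact adj2_hw h1
    ·
      apply neighborSet_pair _ _ (i, (1:Fin 4)) (i, (2:Fin 4))
          (pair_ne (by simp [fv1, fv2]))
      rintro ⟨i', j'⟩
      constructor
      · intro h
        rw [fac2, fromRel_adj] at h
        obtain ⟨hne, h⟩ := h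
        unfold fRel2 at h
        simp only [ne_eq, Prod.mk.injEq, Fin.ext_iff, fv0, fv1, fv2, fv3, Fin.val_mk] at h ⊢
        have := i'.isLt
        omega
      · rintro (h | h) <;> rw [h]
        · exact adj2_hu i
        · exact adj2_hv (by omega)
  · by_cases he : (i:ℕ) % 2 = 0
    · by_cases hl : (i:ℕ) = t - 1
      ·
        apply neighborSet_pair _ _ (i, (0:Fin 4)) (⟨0, by omega⟩, (2:Fin 4))
            (pair_ne (by simp [fv0, fv2]))
        rintro ⟨i', j'⟩
        constructor
        · intro h
          rw [fac2, fromRel_adj] at h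
          obtain ⟨hne, h⟩ := h
          unfold fRel2 at h
          simp only [ne_eq, Prod.mk.injEq, Fin.ext_iff, fv0, fv1, fv2, fv3, Fin.val_mk] at h ⊢
          have := i'.isLt
          omega
        · rintro (h | h) <;> rw [h]
          · exact (adj2_hu i).symm
          · exact adj2_uv (by omega) hl (by simp)
      ·
        apply neighborSet_pair _ _ (i, (0:Fin 4)) (⟨(i:ℕ)+1, by omega⟩, (1:Fin 4))
            (pair_ne (by simp [fv0, fv1]))
        rintro ⟨i', j'⟩
        constructor
        · intro h
          rw [fac2, fromRel_adj] at h
          obtain ⟨hne, h⟩ := h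
          unfold fRel2 at h
          simp only [ne_eq, Prod.mk.injEq, Fin.ext_iff, fv0, fv1, fv2, fv3, Fin.val_mk] at h ⊢
          have := i'.isLt
          omega
        · rintro (h | h) <;> rw [h]
          · exact (adj2_hu i).symm
          · exact adj2_uu (by simp) he
    ·
      apply neighborSet_pair _ _ (i, (0:Fin 4)) (⟨(i:ℕ)-1, by omega⟩, (1:Fin 4))
          (pair_ne (by simp [fv0, fv1]))
      rintro ⟨i', j'⟩
      constructor
      · intro h
        rw [fac2, fromRel_adj] at h
        obtain ⟨hne, h⟩ := h
        unfold fRel2 at h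
        simp only [ne_eq, Prod.mk.injEq, Fin.ext_iff, fv0, fv1, fv2, fv3, Fin.val_mk] at h ⊢
        have := i'.isLt
        omega
      · rintro (h | h) <;> rw [h]
        · exact (adj2_hu i).symm
        · exact (adj2_uu (by simp only [Fin.val_mk] <;> omega) (by simp only [Fin.val_mk] <;> omega)).symm
  · by_cases h0 : (i:ℕ) = 0
    ·
      apply neighborSet_pair _ _ (⟨1, by omega⟩, (2:Fin 4)) (⟨t-1, by omega⟩, (1:Fin 4))
          (pair_ne (by simp only [Fin.val_mk, fv1, fv2]; omega))
      rintro ⟨i', j'⟩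
      constructor
      · intro h
        rw [fac2, fromRel_adj] at h
        obtain ⟨hne, h⟩ := h
        unfold fRel2 at h
        simp only [ne_eq, Prod.mk.injEq, Fin.ext_iff, fv0, fv1, fv2, fv3, Fin.val_mk] at h ⊢
        have := i'.isLt
        omega
      · rintro (h | h) <;> rw [h]
        · exact adj2_vv (by simp only [Fin.val_mk] <;> omega) (Or.inr h0)
        · exact (adj2_uv (by omega) (by simp only [Fin.val_mk] <;> omega) h0).symm
    · by_cases h1 : (i:ℕ) = 1
      ·
        apply neighborSet_pair _ _ (⟨0, by omega⟩, (2:Fin 4)) (⟨2, by omega⟩, (2:Fin 4))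
            (pair_ne (by simp only [Fin.val_mk] <;> omega))
        rintro ⟨i', j'⟩
        constructor
        · intro h
          rw [fac2, fromRel_adj] at h
          obtain ⟨hne, h⟩ := h
          unfold fRel2 at h
          simp only [ne_eq, Prod.mk.injEq, Fin.ext_iff, fv0, fv1, fv2, fv3, Fin.val_mk] at h ⊢
          have := i'.isLt
          omega
        · rintro (h | h) <;> rw [h]
          · exact (adj2_vv (by simp only [Fin.val_mk] <;> omega) (Or.inr (by simp))).symm
          · exact adj2_vv (by simp only [Fin.val_mk] <;> omega) (Or.inl (by omega))
      · by_cases he : (i:ℕ) % 2 = 1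
        ·
          apply neighborSet_pair _ _ (i, (0:Fin 4)) (⟨(i:ℕ)+1, by omega⟩, (2:Fin 4))
              (pair_ne (by simp [fv0, fv2]))
          rintro ⟨i', j'⟩
          constructor
          · intro h
            rw [fac2, fromRel_adj] at h
            obtain ⟨hne, h⟩ := h
            unfold fRel2 at h
            simp only [ne_eq, Prod.mk.injEq, Fin.ext_iff, fv0, fv1, fv2, fv3, Fin.val_mk] at h ⊢
            have := i'.isLt
            omega
          · rintro (h | h) <;> rw [h]
            · exact (adj2_hv (by omega)).symm
            · exact adj2_vv (by simp) (Or.inl he)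
        ·
          apply neighborSet_pair _ _ (i, (0:Fin 4)) (⟨(i:ℕ)-1, by omega⟩, (2:Fin 4))
              (pair_ne (by simp [fv0, fv2]))
          rintro ⟨i', j'⟩
          constructor
          · intro h
            rw [fac2, fromRel_adj] at h
            obtain ⟨hne, h⟩ := h
            unfold fRel2 at h
            simp only [ne_eq, Prod.mk.injEq, Fin.ext_iff, fv0, fv1, fv2, fv3, Fin.val_mk] at h ⊢
            have := i'.isLt
            omega
          · rintro (h | h) <;> rw [h]
            · exact (adj2_hv (by omega)).symm
            · exact (adj2_vv (by simp only [Fin.val_mk] <;> omega) (Or.inl (by simp only [Fin.val_mk] <;> omega))).symm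
  · by_cases h0 : (i:ℕ) = 0
    ·
      apply neighborSet_pair _ _ (i, (0:Fin 4)) (⟨t-1, by omega⟩, (3:Fin 4))
          (pair_ne (by simp [fv0, fv3]))
      rintro ⟨i', j'⟩
      constructor
      · intro h
        rw [fac2, fromRel_adj] at h
        obtain ⟨hne, h⟩ := h
        unfold fRel2 at h
        simp only [ne_eq, Prod.mk.injEq, Fin.ext_iff, fv0, fv1, fv2, fv3, Fin.val_mk] at h ⊢
        have := i'.isLt
        omega
      · rintro (h | h) <;> rw [h]
        · exact (adj2_hw (by omega)).symm
        · exact (adj2_wtw (by omega) (by simp only [Fin.val_mk] <;> omega) h0).symm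
    · by_cases h1 : (i:ℕ) = 1
      ·
        apply neighborSet_pair _ _ (i, (0:Fin 4)) (⟨2, by omega⟩, (3:Fin 4))
            (pair_ne (by simp [fv0, fv3]))
        rintro ⟨i', j'⟩
        constructor
        · intro h
          rw [fac2, fromRel_adj] at h
          obtain ⟨hne, h⟩ := h
          unfold fRel2 at h
          simp only [ne_eq, Prod.mk.injEq, Fin.ext_iff, fv0, fv1, fv2, fv3, Fin.val_mk] at h ⊢
          have := i'.isLt
          omega
        · rintro (h | h) <;> rw [h]
          · exact (adj2_hw (by omega)).symm
          · exact adj2_ww (by simp only [Fin.val_mk] <;> omega) (by omega)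
      · by_cases hl : (i:ℕ) = t - 1
        ·
          apply neighborSet_pair _ _ (⟨(i:ℕ)-1, by omega⟩, (3:Fin 4)) (⟨0, by omega⟩, (3:Fin 4))
              (pair_ne (by simp only [Fin.val_mk] <;> omega))
          rintro ⟨i', j'⟩
          constructor
          · intro h
            rw [fac2, fromRel_adj] at h
            obtain ⟨hne, h⟩ := h
            unfold fRel2 at h
            simp only [ne_eq, Prod.mk.injEq, Fin.ext_iff, fv0, fv1, fv2, fv3, Fin.val_mk] at h ⊢
            have := i'.isLt
            omega
          · rintro (h | h) <;> rw [h]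
            · exact (adj2_ww (by simp only [Fin.val_mk] <;> omega) (by simp only [Fin.val_mk] <;> omega)).symm
            · exact adj2_wtw (by omega) hl (by simp)
        ·
          apply neighborSet_pair _ _ (⟨(i:ℕ)-1, by omega⟩, (3:Fin 4)) (⟨(i:ℕ)+1, by omega⟩, (3:Fin 4))
              (pair_ne (by simp only [Fin.val_mk] <;> omega))
          rintro ⟨i', j'⟩
          constructor
          · intro h
            rw [fac2, fromRel_adj] at h
            obtain ⟨hne, h⟩ := h
            unfold fRel2 at h
            simp only [ne_eq, Prod.mk.injEq, Fin.ext_iff, fv0, fv1, fv2, fv3, Fin.val_mk] at h ⊢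
            have := i'.isLt
            omega
          · rintro (h | h) <;> rw [h]
            · exact (adj2_ww (by simp only [Fin.val_mk] <;> omega) (by simp only [Fin.val_mk] <;> omega)).symm
            · exact adj2_ww (by simp) h0

lemma fRel2_sub (ht : 5 ≤ t) {a b : Fin t × Fin 4} (h : fRel2 t a b) :
    ((a.1 = b.1 ∧ a.2 = 0 ∧ b.2 ≠ 0) ∨
     ((b.1:ℕ) = (a.1:ℕ)+1 ∧ a.2 = b.2 ∧ a.2 ≠ 0) ∨
     ((a.1:ℕ) = t-1 ∧ (b.1:ℕ) = 0 ∧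
       ((a.2 = 1 ∧ b.2 = 2) ∨ (a.2 = 2 ∧ b.2 = 1) ∨ (a.2 = 3 ∧ b.2 = 3)))) := by
  rcases h with ⟨h1, h2, h3⟩ | ⟨h1, h2, h3⟩ | ⟨h1, h2, h3⟩
  · refine Or.inl ⟨Fin.ext h1, h2, ?_⟩
    rcases h3 with h3 | ⟨h3, -⟩ | ⟨h3, -⟩ <;> rw [h3] <;> decide
  · refine Or.inr (Or.inl ⟨h1, h2, ?_⟩)
    rcases h3 with ⟨h3, -⟩ | ⟨h3, -⟩ | ⟨h3, -⟩ <;> rw [h3] <;> decide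
  · exact Or.inr (Or.inr ⟨h1, h2, by tauto⟩)

lemma fac2_le (ht : 5 ≤ t) : fac2 t ≤ flowerSnark t := by
  intro a b h
  rw [fac2, fromRel_adj] at h
  rw [flowerSnark, fromRel_adj]
  obtain ⟨hne, h⟩ := h
  refine ⟨hne, ?_⟩
  rcases h with h | h
  · exact Or.inl (fRel2_sub ht h)
  · exact Or.inr (fRel2_sub ht h)

lemma reach2_w (ht : 5 ≤ t) : ∀ (i : ℕ) (h : i < t), 1 ≤ i →
    (fac2 t).Reachable (⟨i, h⟩, 3) (⟨1, by omega⟩, 3) := by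
  intro i
  induction i with
  | zero => exact fun h h1 => absurd h1 (by omega)
  | succ n ih =>
    intro h h1
    by_cases hn : n = 0
    · subst hn
      exact Reachable.refl _
    · have ha : (fac2 t).Adj (⟨n, by omega⟩, 3) (⟨n+1, h⟩, 3) :=
        adj2_ww (by simp) (by simpa using hn)
      exact ha.symm.reachable.trans (ih (by omega) (by omega))

lemma reach2_h (ht : 5 ≤ t) : ∀ (i : ℕ) (h : i < t), 2 ≤ i →
    (fac2 t).Reachable (⟨i, h⟩, 0) (⟨2, by omega⟩, 0) := by
  intro i
  induction i with
  | zero => exact fun h h2 => absurd h2 (by omega)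
  | succ n ih =>
    intro h h2
    by_cases hn : n = 1
    · subst hn
      exact Reachable.refl _
    · have hn2 : 2 ≤ n := by omega
      have step : (fac2 t).Reachable (⟨n, by omega⟩, 0) (⟨n+1, h⟩, 0) := by
        by_cases he : n % 2 = 0
        · exact (adj2_hu _).reachable.trans
            (((adj2_uu (i := ⟨n, by omega⟩) (i' := ⟨n+1, h⟩) (by simp) (by simpa)).reachable).trans
              (adj2_hu _).symm.reachable)
        · exact (adj2_hv (by simpa)).reachable.trans
            (((adj2_vv (i := ⟨n, by omega⟩) (i' := ⟨n+1, h⟩) (by simp)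
              (Or.inl (by simp only [Fin.val_mk] <;> omega))).reachable).trans
              (adj2_hv (by simp only [Fin.val_mk] <;> omega)).symm.reachable)
      exact step.symm.trans (ih (by omega) hn2)

def S2 (t : ℕ) : Set (Fin t × Fin 4) :=
  {p | (p.2:ℕ) = 3 ∨ ((p.1:ℕ) ≤ 1 ∧ ((p.2:ℕ) = 0 ∨ (p.2:ℕ) = 1))}

lemma clos2 (a b : Fin t × Fin 4) (ht : 5 ≤ t) (h : (fac2 t).Adj a b) :
    a ∈ S2 t ↔ b ∈ S2 t := by
  rw [fac2, fromRel_adj] at h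
  obtain ⟨-, h⟩ := h
  unfold fRel2 at h
  simp only [Fin.ext_iff, fv0, fv1, fv2, fv3] at h
  simp only [S2, Set.mem_setOf_eq]
  have := a.1.isLt
  have := b.1.isLt
  omega

lemma reach2_cov (ht : 5 ≤ t) (p : Fin t × Fin 4) :
    (p ∈ S2 t ∧ (fac2 t).Reachable p (⟨1, by omega⟩, 3)) ∨
    (p ∉ S2 t ∧ (fac2 t).Reachable p (⟨2, by omega⟩, 0)) := by
  obtain ⟨i, j⟩ := p
  have hi := i.isLt
  -- reach from w_0 to anchor1
  have hw0 : (fac2 t).Reachable (⟨0, by omega⟩, 3) (⟨1, by omega⟩, 3) := by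
    have htw : (fac2 t).Adj (⟨t-1, by omega⟩, 3) (⟨0, by omega⟩, 3) :=
      adj2_wtw (by omega) (by simp only [Fin.val_mk] <;> omega) (by simp only [Fin.val_mk] <;> omega)
    exact htw.symm.reachable.trans (reach2_w ht (t-1) (by omega) (by omega))
  -- reach from w_i (any i) to anchor1
  have hwi : (fac2 t).Reachable (i, 3) (⟨1, by omega⟩, 3) := by
    by_cases h0 : (i:ℕ) = 0
    · have : i = ⟨0, by omega⟩ := Fin.ext (by simpa using h0)
      rw [this]; exact hw0
    · have := reach2_w ht (i:ℕ) i.isLt (by omega)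
      exact this
  -- reach from h_i (i ≤ 1) to anchor1
  have hhlow : ∀ (hle : (i:ℕ) ≤ 1), (fac2 t).Reachable (i, 0) (⟨1, by omega⟩, 3) :=
    fun hle => (adj2_hw hle).reachable.trans hwi
  -- reach from h_i (2 ≤ i) to anchor2
  have hhhigh : ∀ (hge : 2 ≤ (i:ℕ)), (fac2 t).Reachable (i, 0) (⟨2, by omega⟩, 0) := by
    intro hge
    have := reach2_h ht (i:ℕ) i.isLt hge
    exact this
  -- reach from v_i to anchor2
  have hvi : (fac2 t).Reachable (i, 2) (⟨2, by omega⟩, 0) := by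
    have hv2 : (fac2 t).Reachable (⟨2, by omega⟩, 2) (⟨2, by omega⟩, 0) :=
      (adj2_hv (by simp only [Fin.val_mk] <;> omega)).symm.reachable
    have hv1 : (fac2 t).Reachable (⟨1, by omega⟩, 2) (⟨2, by omega⟩, 0) :=
      ((adj2_vv (i := ⟨1, by omega⟩) (i' := ⟨2, by omega⟩)
        (by simp only [Fin.val_mk] <;> omega) (Or.inl (by simp only [Fin.val_mk] <;> omega))).reachable).trans hv2
    by_cases h0 : (i:ℕ) = 0
    · have : i = ⟨0, by omega⟩ := Fin.ext (by simpa using h0)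
      rw [this]
      exact ((adj2_vv (i := ⟨0, by omega⟩) (i' := ⟨1, by omega⟩)
        (by simp only [Fin.val_mk] <;> omega) (Or.inr (by simp only [Fin.val_mk] <;> omega))).reachable).trans hv1
    · by_cases h1 : (i:ℕ) = 1
      · have : i = ⟨1, by omega⟩ := Fin.ext (by simpa using h1)
        rw [this]; exact hv1
      · exact (adj2_hv (by omega)).symm.reachable.trans (hhhigh (by omega))
  fin_cases j
  · by_cases h1 : (i:ℕ) ≤ 1
    · exact Or.inl ⟨Or.inr ⟨h1, Or.inl rfl⟩, hhlow h1⟩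
    · refine Or.inr ⟨?_, hhhigh (by omega)⟩
      simp only [S2, Set.mem_setOf_eq, fv0]
      omega
  · by_cases h1 : (i:ℕ) ≤ 1
    · exact Or.inl ⟨Or.inr ⟨h1, Or.inr rfl⟩,
        (adj2_hu i).symm.reachable.trans (hhlow h1)⟩
    · refine Or.inr ⟨?_, (adj2_hu i).symm.reachable.trans (hhhigh (by omega))⟩
      simp only [S2, Set.mem_setOf_eq, fv1]
      omega
  · refine Or.inr ⟨?_, hvi⟩
    simp only [S2, Set.mem_setOf_eq, fv2]
    omega
  · exact Or.inl ⟨Or.inl rfl, hwi⟩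

lemma supp2_w (ht : 5 ≤ t) :
    ((fac2 t).connectedComponentMk (⟨1, by omega⟩, 3)).supp = S2 t := by
  refine supp_eq (Or.inl rfl) ?_ ?_
  · intro p hp
    rcases reach2_cov ht p with ⟨-, r⟩ | ⟨hn, -⟩
    · exact r
    · exact absurd hp hn
  · intro x y hxy hx
    exact (clos2 x y ht hxy).mp hx

lemma supp2_h (ht : 5 ≤ t) :
    ((fac2 t).connectedComponentMk (⟨2, by omega⟩, 0)).supp = (S2 t)ᶜ := by
  refine supp_eq ?_ ?_ ?_
  · simp only [S2, Set.mem_compl_iff, Set.mem_setOf_eq, fv0, Fin.val_mk]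
    omega
  · intro p hp
    rcases reach2_cov ht p with ⟨hin, -⟩ | ⟨-, r⟩
    · exact absurd hin hp
    · exact r
  · intro x y hxy hx hy
    exact hx ((clos2 x y ht hxy).mpr hy)

lemma card_S2 (ht : 5 ≤ t) : Nat.card ↥(S2 t) = t + 4 := by
  have h0 : (0:ℕ) < t := by omega
  have h1 : (1:ℕ) < t := by omega
  have hE : S2 t = insert (⟨0,h0⟩,(0:Fin 4)) (insert (⟨0,h0⟩,(1:Fin 4))
      (insert (⟨1,h1⟩,(0:Fin 4)) (insert (⟨1,h1⟩,(1:Fin 4)) (S3 t)))) := by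
    ext ⟨i,j⟩
    have hj := j.isLt
    simp only [S2, S3, Set.mem_insert_iff, Set.mem_setOf_eq, Prod.mk.injEq,
      Fin.ext_iff, Fin.val_mk, fv0, fv1, fv3]
    omega
  have e4 : (S3 t).ncard = t := by rw [← Nat.card_coe_set_eq, card_S3 ht]
  have n1 : ((⟨1,h1⟩,(1:Fin 4)) : Fin t × Fin 4) ∉ S3 t := by
    simp [S3, fv1]
  have n2 : ((⟨1,h1⟩,(0:Fin 4)) : Fin t × Fin 4) ∉ insert (⟨1,h1⟩,(1:Fin 4)) (S3 t) := by
    simp only [Set.mem_insert_iff, S3, Set.mem_setOf_eq, Prod.mk.injEq, Fin.ext_iff,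
      Fin.val_mk, fv0, fv1, fv3]
    omega
  have n3 : ((⟨0,h0⟩,(1:Fin 4)) : Fin t × Fin 4) ∉
      insert (⟨1,h1⟩,(0:Fin 4)) (insert (⟨1,h1⟩,(1:Fin 4)) (S3 t)) := by
    simp only [Set.mem_insert_iff, S3, Set.mem_setOf_eq, Prod.mk.injEq, Fin.ext_iff,
      Fin.val_mk, fv0, fv1, fv3]
    omega
  have n4 : ((⟨0,h0⟩,(0:Fin 4)) : Fin t × Fin 4) ∉ insert (⟨0,h0⟩,(1:Fin 4))
      (insert (⟨1,h1⟩,(0:Fin 4)) (insert (⟨1,h1⟩,(1:Fin 4)) (S3 t))) := by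
    simp only [Set.mem_insert_iff, S3, Set.mem_setOf_eq, Prod.mk.injEq, Fin.ext_iff,
      Fin.val_mk, fv0, fv1, fv3]
    omega
  rw [Nat.card_coe_set_eq, hE,
    Set.ncard_insert_of_notMem n4 (Set.toFinite _),
    Set.ncard_insert_of_notMem n3 (Set.toFinite _),
    Set.ncard_insert_of_notMem n2 (Set.toFinite _),
    Set.ncard_insert_of_notMem n1 (Set.toFinite _), e4]

lemma card_S2c (ht : 5 ≤ t) : Nat.card ↥((S2 t)ᶜ) = 3 * t - 4 := by
  have h1 : (S2 t).ncard + (S2 t)ᶜ.ncard = Nat.card (Fin t × Fin 4) :=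
    Set.ncard_add_ncard_compl _ (Set.toFinite _) (Set.toFinite _)
  have h2 : Nat.card (Fin t × Fin 4) = 4 * t := by
    simp [Nat.card_eq_fintype_card]
    ring
  have h3 : (S2 t).ncard = t + 4 := by
    rw [← Nat.card_coe_set_eq, card_S2 ht]
  rw [Nat.card_coe_set_eq]
  omega

lemma fac2_ne (ht : 5 ≤ t) :
    (fac2 t).connectedComponentMk (⟨1, by omega⟩, 3)
      ≠ (fac2 t).connectedComponentMk (⟨2, by omega⟩, 0) := by
  intro h
  have hm : ((⟨1, by omega⟩, (3:Fin 4)) : Fin t × Fin 4) ∈ (S2 t)ᶜ := by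
    rw [← supp2_h ht, ← h, ConnectedComponent.mem_supp_iff]
  exact hm (Or.inl rfl)

lemma part2 (ht : 5 ≤ t) (hto : t % 2 = 1) :
    ∃ F : SimpleGraph (Fin t × Fin 4), IsTwoFactor (flowerSnark t) F ∧
      Nat.card F.ConnectedComponent = 2 ∧
      ∃ c₁ c₂ : F.ConnectedComponent, c₁ ≠ c₂ ∧
        Nat.card c₁.supp = t + 4 ∧ Nat.card c₂.supp = 3 * t - 4 := by
  refine ⟨fac2 t, ⟨fac2_le ht, fac2_deg ht hto⟩, ?_, ?_⟩
  · apply card_components_two (fac2_ne ht)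
    intro p
    rcases reach2_cov ht p with ⟨-, r⟩ | ⟨-, r⟩
    · exact Or.inl r
    · exact Or.inr r
  · refine ⟨(fac2 t).connectedComponentMk (⟨1, by omega⟩, 3),
      (fac2 t).connectedComponentMk (⟨2, by omega⟩, 0), fac2_ne ht, ?_, ?_⟩
    · rw [supp2_w ht]; exact card_S2 ht
    · rw [supp2_h ht]; exact card_S2c ht


/-- The Flower snark `J(t)`, `t ≥ 5` odd, has a 2-factor with two cycles of lengths
`t` and `3t`, and a 2-factor with two cycles of lengths `t + 4` and `3t - 4`;
in particular `J(t)` is not 2-factor isomorphic. -/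
theorem flowerSnark_not_two_factor_isomorphic (t : ℕ) (ht : 5 ≤ t) (htodd : Odd t) :
    (∃ F : SimpleGraph (Fin t × Fin 4), IsTwoFactor (flowerSnark t) F ∧
      Nat.card F.ConnectedComponent = 2 ∧
      ∃ c₁ c₂ : F.ConnectedComponent, c₁ ≠ c₂ ∧
        Nat.card c₁.supp = t ∧ Nat.card c₂.supp = 3 * t) ∧
    (∃ F : SimpleGraph (Fin t × Fin 4), IsTwoFactor (flowerSnark t) F ∧
      Nat.card F.ConnectedComponent = 2 ∧
      ∃ c₁ c₂ : F.ConnectedComponent, c₁ ≠ c₂ ∧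
        Nat.card c₁.supp = t + 4 ∧ Nat.card c₂.supp = 3 * t - 4) ∧
    ¬ (∀ F₁ F₂ : SimpleGraph (Fin t × Fin 4),
        IsTwoFactor (flowerSnark t) F₁ → IsTwoFactor (flowerSnark t) F₂ →
        Nonempty (F₁ ≃g F₂)) := by
  have hto : t % 2 = 1 := Nat.odd_iff.mp htodd
  refine ⟨part1 ht hto, part2 ht hto, ?_⟩
  intro H
  obtain ⟨e⟩ := H (fac1 t) (fac2 t) ⟨fac1_le ht, fac1_deg ht hto⟩ ⟨fac2_le ht, fac2_deg ht hto⟩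
  have hcard : Nat.card ((fac2 t).connectedComponentMk
      (e ((⟨0, by omega⟩, 3) : Fin t × Fin 4))).supp = t := by
    rw [iso_supp_card e, supp1_w ht]
    exact card_S3 ht
  rcases reach2_cov ht (e ((⟨0, by omega⟩, 3) : Fin t × Fin 4)) with ⟨-, r⟩ | ⟨-, r⟩
  · rw [ConnectedComponent.sound r, supp2_w ht, card_S2 ht] at hcard
    omega
  · rw [ConnectedComponent.sound r, supp2_h ht, card_S2c ht] at hcard
    omega
end
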